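/- arXiv:1310.6281 — 3 statements merged into one kernel-verified Lean document; each statement's English description precedes it below -/
import Mathlib

section
/- Let d ≥ 1 and let ℙ be an elliptic i.i.d. law on the environment space Ω. Assume there exist nonnegative numbers (β_e)_{e∈U} and a constant C > 1 such that for all e ∈ U and all (t_{e'})_{e'∈U∖{e}} ∈ [0,1]^{U∖{e}}, ℙ(ω(0,e') ≤ t_{e'} for all e' ∈ U, e' ≠ e) ≥ C^{−1} ∏_{e'∈U, e'≠e} t_{e'}^{β_{e'}}. Let e_0 ∈ U realize the maximum of β_e + β_{−e} over e ∈ U, and set K = {0, e_0}. Then for every β ≥ 2Σ_{e'∈U} β_{e'} − (β_{e_0} + β_{−e_0}), one has E_0(T_K^β) = ∞; consequently, since T_K ≤ τ_1^{v̂} whenever τ_1^{v̂} is defined, 𝔼_0((τ_1^{v̂})^β) = ∞. -/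
open MeasureTheory Filter Topology
open scoped ENNReal NNReal Classical BigOperators

namespace RWRE

/-- Sites of the lattice `ℤ^d`. -/
abbrev V (d : ℕ) := Fin d → ℤ

/-- The `2d` canonical unit vectors: `dir d i = e_{i+1}` for `i < d`, and
`dir d i = -e_{i-d+1}` for `d ≤ i < 2d`. -/
def dir (d : ℕ) (i : Fin (2 * d)) : V d :=
  fun j => if (j : ℕ) = (i : ℕ) ∨ (j : ℕ) + d = (i : ℕ) then (if (i : ℕ) < d then 1 else -1) else 0

/-- The index of the direction opposite to direction `i`. -/
def opp {d : ℕ} (i : Fin (2 * d)) : Fin (2 * d) :=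
  ⟨if (i : ℕ) < d then (i : ℕ) + d else (i : ℕ) - d, by have := i.isLt; split <;> omega⟩

/-- The set `𝒫` of probability vectors on the `2d` directions. -/
abbrev Simplex (d : ℕ) := {p : Fin (2 * d) → ℝ // (∀ i, 0 ≤ p i) ∧ ∑ i, p i = 1}

/-- The environment space `Ω = 𝒫^{ℤ^d}`. -/
abbrev Env (d : ℕ) := V d → Simplex d

/-- The space of trajectories of the walk. -/
abbrev Traj (d : ℕ) := ℕ → V d

/-- Transition probability of the walk from `y` to `z` in environment `ω`. -/
noncomputable def trans (d : ℕ) (ω : Env d) (y z : V d) : ℝ :=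
  ∑ i : Fin (2 * d), if z = y + dir d i then (ω y).1 i else 0

/-- `Pq` is the family of quenched laws: `Pq ω x` is a probability measure on trajectories,
starting at `x`, whose cylinder probabilities are given by the products of the transition
probabilities of the environment `ω`. -/
def IsQuenchedLaw (d : ℕ) (Pq : Env d → V d → Measure (Traj d)) : Prop :=
  (∀ ω x, IsProbabilityMeasure (Pq ω x)) ∧
  ∀ (ω : Env d) (x : V d) (n : ℕ) (σ : ℕ → V d),
    (Pq ω x {f | ∀ k ≤ n, f k = σ k}).toReal =
      (if σ 0 = x then 1 else 0) * ∏ k ∈ Finset.range n, trans d ω (σ k) (σ (k + 1))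

/-- The annealed (averaged) law `P_x = ∫ P_{x,ω} dℙ`. -/
noncomputable def annealed (d : ℕ) (ℙ : Measure (Env d)) (Pq : Env d → V d → Measure (Traj d))
    (x : V d) : Measure (Traj d) :=
  ℙ.bind (fun ω => Pq ω x)

/-- `{ω(x) : x ∈ ℤ^d}` are i.i.d. under `ℙ`, with one-site marginal `μ`. -/
def IsIIDWith (d : ℕ) (ℙ : Measure (Env d)) (μ : Measure (Simplex d)) : Prop :=
  IsProbabilityMeasure ℙ ∧ IsProbabilityMeasure μ ∧
  ∀ (s : Finset (V d)) (A : V d → Set (Simplex d)), (∀ x, MeasurableSet (A x)) →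
    ℙ {ω | ∀ x ∈ s, ω x ∈ A x} = ∏ x ∈ s, μ (A x)

/-- `{ω(x) : x ∈ ℤ^d}` are i.i.d. under `ℙ`. -/
def IsIID (d : ℕ) (ℙ : Measure (Env d)) : Prop :=
  ∃ μ : Measure (Simplex d), IsIIDWith d ℙ μ

/-- `ℙ` is elliptic. -/
def IsElliptic (d : ℕ) (ℙ : Measure (Env d)) : Prop :=
  ∀ (x : V d) (i : Fin (2 * d)), ℙ {ω | 0 < (ω x).1 i} = 1

/-- First exit time from a set `A` (with value `0` by convention if the walk never leaves `A`). -/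
noncomputable def exitTime (d : ℕ) (A : Set (V d)) (f : Traj d) : ℕ :=
  sInf {n | f n ∉ A}

/-- The coordinates of a site, as a real vector. -/
def toR (d : ℕ) (x : V d) : Fin d → ℝ := fun j => (x j : ℝ)

/-- Euclidean inner product of a site with a real vector `l`. -/
noncomputable def dotl (d : ℕ) (l : Fin d → ℝ) (x : V d) : ℝ :=
  ∑ j, (x j : ℝ) * l j

/-- The first canonical basis vector `e_1` of `ℝ^d`. -/
def e1 (d : ℕ) : Fin d → ℝ := fun j => if (j : ℕ) = 0 then 1 else 0

/-- `R` is a rotation of `ℝ^d`: a linear automorphism preserving the Euclidean inner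
product, with determinant one. -/
def IsRotation (d : ℕ) (R : (Fin d → ℝ) ≃ₗ[ℝ] (Fin d → ℝ)) : Prop :=
  (∀ u v : Fin d → ℝ, ∑ j, R u j * R v j = ∑ j, u j * v j) ∧
    LinearMap.det (R : (Fin d → ℝ) →ₗ[ℝ] (Fin d → ℝ)) = 1

/-- The box `B_{l,L,L̃} = R((-L,L) × (-L̃,L̃)^{d-1}) ∩ ℤ^d`, where `R` is a rotation
with `R e_1 = l`. -/
def box (d : ℕ) (R : (Fin d → ℝ) ≃ₗ[ℝ] (Fin d → ℝ)) (L Lt : ℝ) : Set (V d) :=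
  {x | ∀ j : Fin d,
    if (j : ℕ) = 0 then -L < R.symm (toR d x) j ∧ R.symm (toR d x) j < L
    else -Lt < R.symm (toR d x) j ∧ R.symm (toR d x) j < Lt}

/-- The polynomial condition `(P)_M` in direction `l` on a box of size `L`. -/
def PolyCond (d : ℕ) (ℙ : Measure (Env d)) (Pq : Env d → V d → Measure (Traj d))
    (l : Fin d → ℝ) (M L : ℝ) : Prop :=
  ∃ Lt : ℝ, 0 < Lt ∧ Lt ≤ 70 * L ^ 3 ∧
  ∃ R : (Fin d → ℝ) ≃ₗ[ℝ] (Fin d → ℝ), IsRotation d R ∧ R (e1 d) = l ∧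
    ((annealed d ℙ Pq 0) {f | dotl d l (f (exitTime d (box d R L Lt) f)) < L}).toReal ≤ 1 / L ^ M

/-- The quantity `η_α = max_{e ∈ U} 𝔼[ω(0,e)^{-α}]`. -/
noncomputable def eta (d : ℕ) (ℙ : Measure (Env d)) (α : ℝ) : ℝ≥0∞ :=
  ⨆ i : Fin (2 * d), ∫⁻ ω, ENNReal.ofReal ((ω 0).1 i ^ (-α)) ∂ℙ

/-- `ᾱ = sup{α ≥ 0 : η_α < ∞}`. -/
noncomputable def alphaBar (d : ℕ) (ℙ : Measure (Env d)) : ℝ :=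
  sSup {α : ℝ | 0 ≤ α ∧ eta d ℙ α < ⊤}

/-- The constant `c_0 = (2/3)·3^{120d⁴ + 3000d(log η_{ᾱ/2})²}`. -/
noncomputable def c0 (d : ℕ) (ℙ : Measure (Env d)) : ℝ :=
  (2 / 3) * (3 : ℝ) ^ (120 * (d : ℝ) ^ 4 +
    3000 * (d : ℝ) * (Real.log (eta d ℙ (alphaBar d ℙ / 2)).toReal) ^ 2)

/-- The ellipticity condition `(E')_β`. -/
def CondE (d : ℕ) (ℙ : Measure (Env d)) (β : ℝ) : Prop :=
  ∃ α : Fin (2 * d) → ℝ, (∀ i, 0 < α i) ∧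
    (∀ i, 2 * (∑ j, α j) - (α i + α (opp i)) > β) ∧
    ∀ i : Fin (2 * d),
      ∫⁻ ω, ∏ j ∈ Finset.univ.erase i, ENNReal.ofReal ((ω 0).1 j ^ (-(α j))) ∂ℙ < ⊤


/-- First `n` with `P n`, as an extended natural number (`⊤` if there is none). -/
noncomputable def firstTime (P : ℕ → Prop) : ℕ∞ :=
  if ∃ n, P n then ((sInf {n | P n} : ℕ) : ℕ∞) else ⊤

/-- The triple `(S_k, R_k, M_k)` of the regeneration construction in direction `l`
with parameter `a`. -/
noncomputable def SR (d : ℕ) (l : Fin d → ℝ) (a : ℝ) (f : Traj d) : ℕ → ℕ∞ × ℕ∞ × ℝ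
  | 0 => (0, 0, dotl d l (f 0))
  | (k + 1) =>
      let M := (SR d l a f k).2.2
      let S : ℕ∞ := firstTime fun n => M + a ≤ dotl d l (f n)
      let s : ℕ := S.toNat
      let R : ℕ∞ := if S = ⊤ then ⊤ else
        S + firstTime fun n => dotl d l (f (s + n)) < dotl d l (f s)
      let M' : ℝ := sSup {r : ℝ | ∃ n : ℕ, (n : ℕ∞) ≤ R ∧ r = dotl d l (f n)}
      (S, R, M')

/-- The first regeneration time `τ_1` in direction `l` with parameter `a`. -/
noncomputable def tau1 (d : ℕ) (l : Fin d → ℝ) (a : ℝ) (f : Traj d) : ℕ∞ :=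
  if _h : ∃ k : ℕ, 1 ≤ k ∧ (SR d l a f k).1 ≠ ⊤ ∧ (SR d l a f k).2.1 = ⊤ then
    (SR d l a f (sInf {k : ℕ | 1 ≤ k ∧ (SR d l a f k).1 ≠ ⊤ ∧ (SR d l a f k).2.1 = ⊤})).1
  else ⊤

/-- The event `τ_1 > u` for a real threshold `u`. -/
def tau1Gt (d : ℕ) (l : Fin d → ℝ) (a : ℝ) (u : ℝ) : Set (Traj d) :=
  {f | ∀ k : ℕ, tau1 d l a f = (k : ℕ∞) → u < (k : ℝ)}

/-- `v` is the asymptotic direction of the walk under the law `P0`: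
`X_n/|X_n|₂ → v` almost surely. -/
def HasAsympDir (d : ℕ) (P0 : Measure (Traj d)) (v : Fin d → ℝ) : Prop :=
  ∀ᵐ f ∂P0, Tendsto
    (fun n => fun j : Fin d => (f n j : ℝ) / Real.sqrt (∑ j', ((f n j' : ℝ)) ^ 2))
    atTop (𝓝 v)

/-- `γ` is the centered Gaussian measure on `ι → ℝ` with covariance matrix `C`:
every linear functional pushes it forward to a one-dimensional centered Gaussian with
the corresponding variance. -/
def IsCenteredGaussian {ι : Type*} [Fintype ι] (γ : Measure (ι → ℝ)) (C : ι → ι → ℝ) : Prop :=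
  ∀ u : ι → ℝ, γ.map (fun x => ∑ i, u i * x i) =
    ProbabilityTheory.gaussianReal 0 (Real.toNNReal (∑ i, ∑ j, u i * C i j * u j))

/-- `ε^{1/2}(X_{⌊ε⁻¹n⌋} - ⌊ε⁻¹n⌋ v)` converges in law under `P0`, as `ε → 0`, to a Brownian
motion with non-degenerate covariance matrix `C`: the finite-dimensional distributions at any
times `t : Fin k → ℕ` converge weakly to the centered Gaussian with covariance
`min(t_p, t_q)·C`. -/
def CLTtoBM (d : ℕ) (P0 : Measure (Traj d)) (v : Fin d → ℝ)
    (Cmat : Matrix (Fin d) (Fin d) ℝ) : Prop :=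
  ∀ (k : ℕ) (t : Fin k → ℕ),
    ∃ γ : Measure (Fin k × Fin d → ℝ), IsProbabilityMeasure γ ∧
      IsCenteredGaussian γ (fun p q => (min (t p.1) (t q.1) : ℝ) * Cmat p.2 q.2) ∧
      ∀ g : BoundedContinuousFunction ((Fin k × Fin d) → ℝ) ℝ,
        Tendsto (fun ε : ℝ =>
            ∫ f : Traj d, g (fun p =>
              Real.sqrt ε * ((f (⌊(t p.1 : ℝ) / ε⌋₊) p.2 : ℝ) - (⌊(t p.1 : ℝ) / ε⌋₊ : ℝ) * v p.2))
              ∂P0)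
          (𝓝[>] (0 : ℝ)) (𝓝 (∫ x, g x ∂γ))

/-- `μ` is the Dirichlet distribution with parameters `β` on the simplex, characterized by
its (joint polynomial) moments. -/
def IsDirichlet (d : ℕ) (μ : Measure (Simplex d)) (β : Fin (2 * d) → ℝ) : Prop :=
  IsProbabilityMeasure μ ∧
  ∀ k : Fin (2 * d) → ℕ,
    ∫ p, ∏ i, (p.1 i) ^ (k i) ∂μ =
      (Real.Gamma (∑ i, β i) / Real.Gamma ((∑ i, β i) + (∑ i, (k i : ℝ)))) *
        ∏ i, (Real.Gamma (β i + k i) / Real.Gamma (β i))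

/-! ### Directed graph structure on `ℤ^d` and flows -/

/-- Directed nearest-neighbour edges of `ℤ^d`: the pair `(z, i)` represents the edge from
`z` to `z + dir d i`. -/
abbrev Edge (d : ℕ) := V d × Fin (2 * d)

def tail (d : ℕ) (e : Edge d) : V d := e.1

def head (d : ℕ) (e : Edge d) : V d := e.1 + dir d e.2

/-- Divergence of an edge function at a vertex. -/
noncomputable def divg (d : ℕ) (θ : Edge d → ℝ) (v : V d) : ℝ :=
  (∑ᶠ e ∈ {e : Edge d | tail d e = v}, θ e) - ∑ᶠ e ∈ {e : Edge d | head d e = v}, θ e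

/-- `θ` is a flow from `A` to `Z` on the directed graph `(ℤ^d, E_{ℤ^d})`. -/
def IsFlow (d : ℕ) (θ : Edge d → ℝ) (A Z : Set (V d)) : Prop :=
  (∀ e, 0 ≤ θ e) ∧ (∀ v, v ∉ A ∪ Z → divg d θ v = 0) ∧
    (∀ v ∈ A, 0 ≤ divg d θ v) ∧ (∀ v ∈ Z, divg d θ v ≤ 0)

/-- `θ` is a unit flow from `A` to `Z`. -/
def IsUnitFlow (d : ℕ) (θ : Edge d → ℝ) (A Z : Set (V d)) : Prop :=
  IsFlow d θ A Z ∧ ∑ᶠ v ∈ A, divg d θ v = 1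


/-! ### Auxiliary lemmas for `trap_infinite_moments` -/

section Aux

variable {d : ℕ}

lemma dir_apply_of_lt (i : Fin (2 * d)) (hi : (i : ℕ) < d) (j : Fin d) :
    dir d i j = if (j : ℕ) = (i : ℕ) then 1 else 0 := by
  have hj := j.isLt
  by_cases h : (j : ℕ) = (i : ℕ)
  · simp [dir, h, hi]
  · have h2 : ¬((j : ℕ) = (i : ℕ) ∨ (j : ℕ) + d = (i : ℕ)) := by omega
    simp only [dir, if_neg h2, if_neg h]

lemma dir_apply_of_ge (i : Fin (2 * d)) (hi : d ≤ (i : ℕ)) (j : Fin d) :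
    dir d i j = if (j : ℕ) + d = (i : ℕ) then -1 else 0 := by
  have hj := j.isLt
  by_cases h : (j : ℕ) + d = (i : ℕ)
  · have : ¬ ((i:ℕ) < d) := by omega
    simp [dir, h, this]
  · have h2 : ¬((j : ℕ) = (i : ℕ) ∨ (j : ℕ) + d = (i : ℕ)) := by omega
    simp only [dir, if_neg h2, if_neg h]

lemma dir_injective : Function.Injective (dir d) := by
  intro i i' h
  have h2 := i.isLt
  have h2' := i'.isLt
  rcases lt_or_ge (i : ℕ) d with hi | hi
  · have hj : ((⟨(i : ℕ), hi⟩ : Fin d) : ℕ) = (i : ℕ) := rfl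
    have := congrFun h ⟨(i : ℕ), hi⟩
    rcases lt_or_ge (i' : ℕ) d with hi' | hi'
    · rw [dir_apply_of_lt i hi, dir_apply_of_lt i' hi'] at this
      simp only [hj, if_pos rfl] at this
      by_cases hee : (i : ℕ) = (i' : ℕ)
      · exact Fin.ext hee
      · rw [if_neg hee] at this; norm_num at this
    · rw [dir_apply_of_lt i hi, dir_apply_of_ge i' hi'] at this
      simp only [hj, if_pos rfl] at this
      by_cases hee : (i : ℕ) + d = (i' : ℕ)
      · rw [if_pos hee] at this; norm_num at this
      · rw [if_neg hee] at this; norm_num at this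
  · have hid : (i : ℕ) - d < d := by omega
    have hj : ((⟨(i : ℕ) - d, hid⟩ : Fin d) : ℕ) = (i : ℕ) - d := rfl
    have := congrFun h ⟨(i : ℕ) - d, hid⟩
    have hcond : (i : ℕ) - d + d = (i : ℕ) := by omega
    rcases lt_or_ge (i' : ℕ) d with hi' | hi'
    · rw [dir_apply_of_ge i hi, dir_apply_of_lt i' hi'] at this
      simp only [hj, if_pos hcond] at this
      by_cases hee : (i : ℕ) - d = (i' : ℕ)
      · rw [if_pos hee] at this; norm_num at this
      · rw [if_neg hee] at this; norm_num at this
    · rw [dir_apply_of_ge i hi, dir_apply_of_ge i' hi'] at this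
      simp only [hj, if_pos hcond] at this
      by_cases hee : (i : ℕ) - d + d = (i' : ℕ)
      · exact Fin.ext (by omega)
      · rw [if_neg hee] at this; norm_num at this

lemma dir_ne_zero (i : Fin (2 * d)) : dir d i ≠ 0 := by
  have h2 := i.isLt
  intro h
  rcases lt_or_ge (i : ℕ) d with hi | hi
  · have := congrFun h ⟨(i : ℕ), hi⟩
    rw [dir_apply_of_lt i hi] at this
    simp at this
  · have hid : (i : ℕ) - d < d := by omega
    have := congrFun h ⟨(i : ℕ) - d, hid⟩
    rw [dir_apply_of_ge i hi] at this
    have hcond : (i : ℕ) - d + d = (i : ℕ) := by omega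
    rw [if_pos hcond] at this
    norm_num at this

lemma opp_ne (i : Fin (2 * d)) : opp i ≠ i := by
  have h2 := i.isLt
  intro h
  have := congrArg (fun x : Fin (2 * d) => (x : ℕ)) h
  simp only [opp] at this
  split at this <;> omega

lemma dir_opp (i : Fin (2 * d)) : dir d (opp i) = -dir d i := by
  have h2 := i.isLt
  funext j
  have hj := j.isLt
  rcases lt_or_ge (i : ℕ) d with hi | hi
  · have hov : ((opp i : Fin (2 * d)) : ℕ) = (i : ℕ) + d := by simp [opp, hi]
    have hog : d ≤ ((opp i : Fin (2 * d)) : ℕ) := by omega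
    rw [dir_apply_of_ge _ hog]
    simp only [Pi.neg_apply, dir_apply_of_lt i hi]
    by_cases h : (j : ℕ) = (i : ℕ)
    · rw [if_pos (by omega : (j:ℕ) + d = ((opp i : Fin (2*d)):ℕ)), if_pos h]
      try norm_num
    · rw [if_neg (by omega : ¬ ((j:ℕ) + d = ((opp i : Fin (2*d)):ℕ))), if_neg h]
      try norm_num
  · have hnlt : ¬ ((i:ℕ) < d) := by omega
    have hov : ((opp i : Fin (2 * d)) : ℕ) = (i : ℕ) - d := by simp [opp, hnlt]
    have hol : ((opp i : Fin (2 * d)) : ℕ) < d := by omega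
    simp only [Pi.neg_apply, dir_apply_of_lt _ hol, dir_apply_of_ge i hi, hov]
    by_cases h : (j : ℕ) + d = (i : ℕ)
    · rw [if_pos (by omega : (j:ℕ) = (i:ℕ) - d), if_pos h]
      try norm_num
    · rw [if_neg (by omega : ¬ ((j:ℕ) = (i:ℕ) - d)), if_neg h]
      try norm_num

lemma simplex_nonneg (p : Simplex d) (i : Fin (2 * d)) : 0 ≤ p.1 i := p.2.1 i

lemma simplex_le_one (p : Simplex d) (i : Fin (2 * d)) : p.1 i ≤ 1 := by
  calc p.1 i ≤ ∑ j, p.1 j :=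
        Finset.single_le_sum (fun j _ => p.2.1 j) (Finset.mem_univ i)
    _ = 1 := p.2.2

lemma trans_add_dir (ω : Env d) (y : V d) (i : Fin (2 * d)) :
    trans d ω y (y + dir d i) = (ω y).1 i := by
  unfold trans
  rw [Finset.sum_eq_single i]
  · rw [if_pos rfl]
  · intro j _ hj
    rw [if_neg]
    intro h
    exact hj (dir_injective (add_left_cancel h)).symm
  · intro h; exact absurd (Finset.mem_univ i) h

lemma trans_eq_zero (ω : Env d) (y z : V d) (h : ∀ i, z ≠ y + dir d i) :
    trans d ω y z = 0 := by
  unfold trans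
  exact Finset.sum_eq_zero fun i _ => if_neg (h i)

lemma trans_self (ω : Env d) (y : V d) : trans d ω y y = 0 := by
  apply trans_eq_zero
  intro i h
  apply dir_ne_zero i
  have h2 : y + dir d i = y + 0 := by rw [add_zero]; exact h.symm
  exact add_left_cancel h2

lemma trans_nonneg (ω : Env d) (y z : V d) : 0 ≤ trans d ω y z := by
  unfold trans
  apply Finset.sum_nonneg
  intro i _
  split
  · exact (ω y).2.1 i
  · exact le_refl 0

lemma trans_le_one (ω : Env d) (y z : V d) : trans d ω y z ≤ 1 := by
  by_cases h : ∃ i, z = y + dir d i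
  · obtain ⟨i, rfl⟩ := h
    rw [trans_add_dir]
    exact simplex_le_one _ i
  · push_neg at h
    rw [trans_eq_zero ω y z h]
    norm_num

end Aux

section Aux2

variable {d : ℕ}

/-- Cylinder sets of trajectories. -/
def Cyl (d : ℕ) (σ : Traj d) (n : ℕ) : Set (Traj d) := {f | ∀ k ≤ n, f k = σ k}

lemma measurableSet_cyl (σ : Traj d) (n : ℕ) : MeasurableSet (Cyl d σ n) := by
  have h : Cyl d σ n = ⋂ (k : ℕ), ⋂ (_ : k ≤ n), (fun f : Traj d => f k) ⁻¹' {σ k} := by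
    ext f; simp [Cyl]
  rw [h]
  exact MeasurableSet.iInter fun k => MeasurableSet.iInter fun _ =>
    (measurable_pi_apply k) (measurableSet_singleton _)

/-- Extension of a finite path to a trajectory. -/
def extSeq (d n : ℕ) (g : Fin (n + 1) → V d) : Traj d :=
  fun k => if h : k < n + 1 then g ⟨k, h⟩ else 0

def cylSets (d : ℕ) : Set (Set (Traj d)) := {S | ∃ n σ, S = Cyl d σ n}

lemma isPiSystem_cylSets : IsPiSystem (cylSets d) := by
  rintro S ⟨n, σ, rfl⟩ T ⟨m, σ', rfl⟩ ⟨f, hfS, hfT⟩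
  rcases le_total n m with h | h
  · refine ⟨m, σ', ?_⟩
    apply Set.eq_of_subset_of_subset Set.inter_subset_right
    intro g hg
    refine ⟨fun k hk => ?_, hg⟩
    rw [hg k (hk.trans h), ← hfT k (hk.trans h), hfS k hk]
  · refine ⟨n, σ, ?_⟩
    apply Set.eq_of_subset_of_subset Set.inter_subset_left
    intro g hg
    refine ⟨hg, fun k hk => ?_⟩
    rw [hg k (hk.trans h), ← hfS k (hk.trans h), hfT k hk]

lemma traj_measurableSpace_eq :
    (inferInstance : MeasurableSpace (Traj d)) = MeasurableSpace.generateFrom (cylSets d) := by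
  apply le_antisymm
  · have hle : ∀ k : ℕ, MeasurableSpace.comap (fun f : Traj d => f k) inferInstance ≤
        MeasurableSpace.generateFrom (cylSets d) := by
      intro k
      rw [← measurable_iff_comap_le]
      apply @measurable_to_countable' (V d) (Traj d) _ _
        (MeasurableSpace.generateFrom (cylSets d)) (fun f => f k)
      intro v
      have heq : ((fun f : Traj d => f k) ⁻¹' {v}) =
          ⋃ (g : {g : Fin (k+1) → V d // g (Fin.last k) = v}), Cyl d (extSeq d k g.1) k := by
        ext f
        constructor
        · intro hf
          simp only [Set.mem_preimage, Set.mem_singleton_iff] at hf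
          refine Set.mem_iUnion.mpr ⟨⟨fun j => f j, ?_⟩, ?_⟩
          · simpa [Fin.last] using hf
          · intro m hm
            simp [Cyl, extSeq, Nat.lt_succ_of_le hm]
        · intro hf
          obtain ⟨g, hg⟩ := Set.mem_iUnion.mp hf
          have h1 := hg k (le_refl k)
          simp only [Set.mem_preimage, Set.mem_singleton_iff]
          rw [h1]
          have h2 : (⟨k, Nat.lt_succ_self k⟩ : Fin (k+1)) = Fin.last k := rfl
          simp [extSeq, Nat.lt_succ_self k, h2, g.2]
      rw [heq]
      exact MeasurableSet.iUnion fun g =>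
        MeasurableSpace.measurableSet_generateFrom ⟨k, extSeq d k g.1, rfl⟩
    exact iSup_le hle
  · exact MeasurableSpace.generateFrom_le (by rintro t ⟨n, σ, rfl⟩; exact measurableSet_cyl σ n)

lemma measurable_env_eval (y : V d) (i : Fin (2 * d)) :
    Measurable fun ω : Env d => (ω y).1 i :=
  ((measurable_pi_apply i).comp measurable_subtype_coe).comp (measurable_pi_apply y)

lemma measurable_trans_env (y z : V d) : Measurable fun ω : Env d => trans d ω y z := by
  unfold trans
  apply Finset.measurable_sum
  intro i _
  by_cases h : z = y + dir d i
  · simp only [if_pos h]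
    exact measurable_env_eval y i
  · simp only [if_neg h]
    exact measurable_const

lemma Pq_cyl {Pq : Env d → V d → Measure (Traj d)} (hQ : IsQuenchedLaw d Pq)
    (ω : Env d) (x : V d) (σ : Traj d) (n : ℕ) :
    Pq ω x (Cyl d σ n) = ENNReal.ofReal
      ((if σ 0 = x then (1:ℝ) else 0) * ∏ k ∈ Finset.range n, trans d ω (σ k) (σ (k+1))) := by
  haveI := hQ.1 ω x
  rw [← hQ.2 ω x n σ, ENNReal.ofReal_toReal (measure_ne_top _ _)]
  rfl

lemma measurable_Pq {Pq : Env d → V d → Measure (Traj d)} (hQ : IsQuenchedLaw d Pq) (x : V d) :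
    Measurable fun ω => Pq ω x := by
  apply Measure.measurable_of_measurable_coe
  intro s hs
  refine MeasurableSpace.induction_on_inter (C := fun s _ => Measurable fun ω => Pq ω x s)
    (traj_measurableSpace_eq (d := d)) isPiSystem_cylSets ?_ ?_ ?_ ?_ s hs
  · simp only [measure_empty]; exact measurable_const
  · rintro t ⟨n, σ, rfl⟩
    simp_rw [Pq_cyl hQ _ x σ n]
    apply ENNReal.measurable_ofReal.comp
    exact (Finset.measurable_prod _ fun k _ => measurable_trans_env _ _).const_mul _
  · intro t ht hmt
    haveI : ∀ ω, IsProbabilityMeasure (Pq ω x) := fun ω => hQ.1 ω x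
    have h : (fun ω => Pq ω x tᶜ) = fun ω => 1 - Pq ω x t := by
      funext ω
      rw [measure_compl ht (measure_ne_top _ _), measure_univ]
    rw [h]
    exact hmt.const_sub 1
  · intro g hdisj hmeas hC
    have h : (fun ω => Pq ω x (⋃ i, g i)) = fun ω => ∑' i, Pq ω x (g i) := by
      funext ω; exact measure_iUnion hdisj hmeas
    rw [h]
    exact Measurable.ennreal_tsum hC

lemma annealed_apply (ℙ : Measure (Env d)) {Pq : Env d → V d → Measure (Traj d)}
    (hQ : IsQuenchedLaw d Pq) {s : Set (Traj d)} (hs : MeasurableSet s) :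
    annealed d ℙ Pq 0 s = ∫⁻ ω, Pq ω 0 s ∂ℙ :=
  Measure.bind_apply hs (measurable_Pq hQ 0).aemeasurable

end Aux2

section Aux3

variable {d : ℕ}

/-- The alternating trajectory `0, e₀, 0, e₀, …`. -/
def altT (d : ℕ) (i0 : Fin (2 * d)) : Traj d := fun k => if k % 2 = 0 then 0 else dir d i0

lemma altT_mem (i0 : Fin (2 * d)) (k : ℕ) :
    altT d i0 k ∈ ({0, dir d i0} : Set (V d)) := by
  unfold altT; split
  · exact Set.mem_insert _ _
  · exact Set.mem_insert_iff.mpr (Or.inr rfl)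

lemma trans_altT (i0 : Fin (2 * d)) (ω : Env d) (k : ℕ) :
    trans d ω (altT d i0 k) (altT d i0 (k+1)) =
      if k % 2 = 0 then (ω 0).1 i0 else (ω (dir d i0)).1 (opp i0) := by
  by_cases h : k % 2 = 0
  · have h1 : ¬ ((k+1) % 2 = 0) := by omega
    simp only [altT, if_pos h, if_neg h1]
    have h2 : dir d i0 = 0 + dir d i0 := (zero_add _).symm
    rw [h2, trans_add_dir]
  · have h1 : (k+1) % 2 = 0 := by omega
    simp only [altT, if_neg h, if_pos h1]
    have h2 : (0 : V d) = dir d i0 + dir d (opp i0) := by rw [dir_opp]; simp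
    rw [h2, trans_add_dir]

lemma prod_trans_ge (i0 : Fin (2 * d)) (ω : Env d) (n : ℕ) {c : ℝ} (hc : 0 ≤ c)
    (h0 : c ≤ (ω 0).1 i0) (h1 : c ≤ (ω (dir d i0)).1 (opp i0)) :
    c ^ n ≤ ∏ k ∈ Finset.range n, trans d ω (altT d i0 k) (altT d i0 (k+1)) := by
  have h : c ^ n = ∏ _k ∈ Finset.range n, c := by
    rw [Finset.prod_const, Finset.card_range]
  rw [h]
  apply Finset.prod_le_prod (fun k _ => hc)
  intro k _
  rw [trans_altT]
  split
  · exact h0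
  · exact h1

lemma prod_trans_le (i0 : Fin (2 * d)) (ω : Env d) (m : ℕ) :
    ∏ k ∈ Finset.range (2 * m), trans d ω (altT d i0 k) (altT d i0 (k+1)) ≤
      ((ω 0).1 i0) ^ m := by
  induction m with
  | zero => simp
  | succ m ih =>
    have hx : (0:ℝ) ≤ (ω 0).1 i0 := simplex_nonneg _ _
    have h2 : 2 * (m+1) = (2*m) + 1 + 1 := by ring
    rw [h2, Finset.prod_range_succ, Finset.prod_range_succ]
    have e1 : trans d ω (altT d i0 (2*m)) (altT d i0 (2*m+1)) = (ω 0).1 i0 := by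
      rw [trans_altT]
      simp [Nat.mul_mod_right]
    have hinner : (∏ k ∈ Finset.range (2*m), trans d ω (altT d i0 k) (altT d i0 (k+1))) *
        trans d ω (altT d i0 (2*m)) (altT d i0 (2*m+1)) ≤ ((ω 0).1 i0) ^ m * ((ω 0).1 i0) := by
      apply mul_le_mul ih (le_of_eq e1) (trans_nonneg _ _ _) (pow_nonneg hx m)
    calc (∏ k ∈ Finset.range (2*m), trans d ω (altT d i0 k) (altT d i0 (k+1))) *
          trans d ω (altT d i0 (2*m)) (altT d i0 (2*m+1)) *
          trans d ω (altT d i0 (2*m+1)) (altT d i0 (2*m+1+1)) ≤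
        ((ω 0).1 i0) ^ m * ((ω 0).1 i0) * 1 := by
          apply mul_le_mul hinner (trans_le_one _ _ _) (trans_nonneg _ _ _)
            (mul_nonneg (pow_nonneg hx m) hx)
      _ = ((ω 0).1 i0) ^ (m + 1) := by rw [mul_one, pow_succ]

lemma one_third_le_pow (n : ℕ) : (3:ℝ)⁻¹ ≤ (1 - 1/((n:ℝ)+1))^n := by
  rcases Nat.eq_zero_or_pos n with rfl | hn
  · norm_num
  · have hn' : (0:ℝ) < n := by exact_mod_cast hn
    have hne : (n:ℝ) ≠ 0 := ne_of_gt hn'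
    have key : (1 + 1/(n:ℝ))^n ≤ 3 := by
      have h1 : 1 + 1/(n:ℝ) ≤ Real.exp (1/(n:ℝ)) := by
        have := Real.add_one_le_exp (1/(n:ℝ)); linarith
      have h2 : (1 + 1/(n:ℝ))^n ≤ (Real.exp (1/(n:ℝ)))^n :=
        pow_le_pow_left₀ (by positivity) h1 n
      rw [← Real.exp_nat_mul] at h2
      have h3 : (n:ℝ) * (1/(n:ℝ)) = 1 := by field_simp
      rw [h3] at h2
      have := Real.exp_one_lt_d9
      linarith
    have hpos : (0:ℝ) < (1 + 1/(n:ℝ))^n := by positivity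
    have heq : 1 - 1/((n:ℝ)+1) = (1 + 1/(n:ℝ))⁻¹ := by
      have hne1 : (n:ℝ) + 1 ≠ 0 := by positivity
      field_simp
      ring
    rw [heq, inv_pow]
    exact inv_anti₀ hpos key

end Aux3

section Aux4

variable {d : ℕ}

lemma lowset_measurable (i : Fin (2*d)) (t : ℝ) :
    MeasurableSet {p : Simplex d | ∀ j, j ≠ i → p.1 j ≤ t} := by
  have h : {p : Simplex d | ∀ j, j ≠ i → p.1 j ≤ t} =
      ⋂ (j : Fin (2*d)), ⋂ (_ : j ≠ i), (fun p : Simplex d => p.1 j) ⁻¹' Set.Iic t := by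
    ext p; simp
  rw [h]
  exact MeasurableSet.iInter fun j => MeasurableSet.iInter fun _ =>
    ((measurable_pi_apply j).comp measurable_subtype_coe) measurableSet_Iic

lemma lowset_bound (p : Simplex d) (i : Fin (2*d)) {t : ℝ} (ht : 0 ≤ t)
    (hp : ∀ j, j ≠ i → p.1 j ≤ t) : 1 - (2*(d:ℝ))*t ≤ p.1 i := by
  have hsum : p.1 i + ∑ j ∈ Finset.univ.erase i, p.1 j = 1 := by
    rw [Finset.add_sum_erase _ _ (Finset.mem_univ i)]; exact p.2.2
  have hcard : ((Finset.univ.erase i).card : ℝ) ≤ 2*(d:ℝ) := by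
    have h1 : (Finset.univ.erase i).card ≤ 2*d := by
      calc (Finset.univ.erase i).card ≤ (Finset.univ : Finset (Fin (2*d))).card :=
          Finset.card_erase_le
        _ = 2*d := by rw [Finset.card_univ, Fintype.card_fin]
    exact_mod_cast h1
  have hle : ∑ j ∈ Finset.univ.erase i, p.1 j ≤ (2*(d:ℝ)) * t := by
    calc ∑ j ∈ Finset.univ.erase i, p.1 j ≤ (Finset.univ.erase i).card • t :=
        Finset.sum_le_card_nsmul _ _ t (fun j hj => hp j (Finset.ne_of_mem_erase hj))
      _ = ((Finset.univ.erase i).card : ℝ) * t := nsmul_eq_mul _ _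
      _ ≤ (2*(d:ℝ)) * t := mul_le_mul_of_nonneg_right hcard ht
  linarith

lemma single_site {ℙ : Measure (Env d)} {μ : Measure (Simplex d)}
    (hIID : IsIIDWith d ℙ μ) {A : Set (Simplex d)} (hA : MeasurableSet A) (x : V d) :
    ℙ {ω : Env d | ω x ∈ A} = μ A := by
  have h := hIID.2.2 {x} (fun _ => A) (fun _ => hA)
  have h1 : {ω : Env d | ∀ y ∈ ({x} : Finset (V d)), ω y ∈ A} = {ω : Env d | ω x ∈ A} := by
    ext ω; simp
  rw [h1, Finset.prod_singleton] at h
  exact h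

lemma two_site {ℙ : Measure (Env d)} {μ : Measure (Simplex d)}
    (hIID : IsIIDWith d ℙ μ) {A B : Set (Simplex d)} (hA : MeasurableSet A)
    (hB : MeasurableSet B) {x y : V d} (hxy : x ≠ y) :
    ℙ {ω : Env d | ω x ∈ A ∧ ω y ∈ B} = μ A * μ B := by
  classical
  set AB : V d → Set (Simplex d) := fun z => if z = x then A else B with hAB
  have hABx : AB x = A := if_pos rfl
  have hABy : AB y = B := if_neg (Ne.symm hxy)
  have hABm : ∀ z, MeasurableSet (AB z) := by
    intro z
    by_cases hz : z = x
    · rw [show AB z = A from if_pos hz]; exact hA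
    · rw [show AB z = B from if_neg hz]; exact hB
  have h := hIID.2.2 {x, y} AB hABm
  have h1 : {ω : Env d | ∀ z ∈ ({x, y} : Finset (V d)), ω z ∈ AB z} =
      {ω : Env d | ω x ∈ A ∧ ω y ∈ B} := by
    ext ω
    simp only [Finset.mem_insert, Finset.mem_singleton, Set.mem_setOf_eq]
    constructor
    · intro hz
      refine ⟨?_, ?_⟩
      · have h2 := hz x (Or.inl rfl); rwa [hABx] at h2
      · have h2 := hz y (Or.inr rfl); rwa [hABy] at h2
    · rintro ⟨h1, h2⟩ z (rfl | rfl)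
      · rwa [hABx]
      · rwa [hABy]
  rw [h1, Finset.prod_pair hxy, hABx, hABy] at h
  exact h

lemma cyl_congr {σ σ' : Traj d} {n : ℕ} (h : ∀ k ≤ n, σ k = σ' k) :
    Cyl d σ n = Cyl d σ' n := by
  ext f
  constructor <;> intro hf k hk
  · rw [hf k hk, h k hk]
  · rw [hf k hk, ← h k hk]

lemma en_nested {i0 : Fin (2*d)} {f : Traj d} {m n : ℕ} (h : m ≤ n)
    (hf : f ∈ Cyl d (altT d i0) n) : f ∈ Cyl d (altT d i0) m :=
  fun k hk => hf k (hk.trans h)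

lemma integrand_zero (i0 : Fin (2*d)) {m : ℕ} (g : Fin (2*m+1) → ({0, dir d i0} : Set (V d)))
    (hg : ¬ ∀ j : Fin (2*m+1), (g j : V d) = altT d i0 (j : ℕ)) (ω : Env d) :
    (if extSeq d (2*m) (fun j => (g j : V d)) 0 = 0 then (1:ℝ) else 0) *
      ∏ k ∈ Finset.range (2*m), trans d ω (extSeq d (2*m) (fun j => (g j : V d)) k)
        (extSeq d (2*m) (fun j => (g j : V d)) (k+1)) = 0 := by
  classical
  set σ : Traj d := extSeq d (2*m) (fun j => (g j : V d)) with hσ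
  have hσval : ∀ k (hk : k ≤ 2*m), σ k = (g ⟨k, Nat.lt_succ_of_le hk⟩ : V d) := by
    intro k hk
    simp [hσ, extSeq, Nat.lt_succ_of_le hk]
  have hσK : ∀ k, k ≤ 2*m → σ k ∈ ({0, dir d i0} : Set (V d)) := by
    intro k hk
    rw [hσval k hk]
    exact (g ⟨k, Nat.lt_succ_of_le hk⟩).2
  push_neg at hg
  obtain ⟨j, hj⟩ := hg
  have hne : Set.Nonempty {k : ℕ | k ≤ 2*m ∧ σ k ≠ altT d i0 k} := by
    refine ⟨(j : ℕ), Nat.lt_succ_iff.mp j.isLt, ?_⟩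
    rw [hσval (j : ℕ) (Nat.lt_succ_iff.mp j.isLt)]
    have : (⟨(j : ℕ), Nat.lt_succ_of_le (Nat.lt_succ_iff.mp j.isLt)⟩ : Fin (2*m+1)) = j :=
      Fin.ext rfl
    rw [this]
    exact hj
  set N := sInf {k : ℕ | k ≤ 2*m ∧ σ k ≠ altT d i0 k} with hN
  have hmem := Nat.sInf_mem hne
  rw [← hN] at hmem
  obtain ⟨hNle, hNne⟩ := hmem
  rcases Nat.eq_zero_or_pos N with hN0 | hNpos
  · rw [hN0] at hNne
    have : ¬ (σ 0 = 0) := by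
      intro h
      apply hNne
      rw [h]
      simp [altT]
    rw [if_neg this, zero_mul]
  · obtain ⟨j', hj'eqN⟩ : ∃ j', N = j' + 1 := ⟨N - 1, by omega⟩
    rw [hj'eqN] at hNle hNne
    have hj'notin : j' ∉ {k : ℕ | k ≤ 2*m ∧ σ k ≠ altT d i0 k} :=
      Nat.notMem_of_lt_sInf (by rw [← hN]; omega)
    have hj'le : j' ≤ 2*m := by omega
    have hj'eq : σ j' = altT d i0 j' := by
      by_contra hcon
      exact hj'notin ⟨hj'le, hcon⟩
    -- σ (j'+1) ∈ K, ≠ altT (j'+1), hence = altT j'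
    have hKmem : σ (j'+1) ∈ ({0, dir d i0} : Set (V d)) := hσK (j'+1) hNle
    have he0 : (0 : V d) ≠ dir d i0 := fun h => dir_ne_zero i0 h.symm
    have hstep : σ (j'+1) = altT d i0 j' := by
      rcases Set.mem_insert_iff.mp hKmem with h0 | h0
      · -- σ (j'+1) = 0
        by_cases hpar : j' % 2 = 0
        · -- altT (j'+1) = dir d i0, altT j' = 0
          simp only [altT, if_pos hpar]
          exact h0
        · -- altT (j'+1) = 0 : contradiction with hNne
          have h1 : (j'+1) % 2 = 0 := by omega
          exfalso
          apply hNne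
          rw [h0]
          simp [altT, h1]
      · -- σ (j'+1) = dir d i0
        rw [Set.mem_singleton_iff] at h0
        by_cases hpar : j' % 2 = 0
        · have h1 : ¬ ((j'+1) % 2 = 0) := by omega
          exfalso
          apply hNne
          rw [h0]
          simp [altT, h1]
        · simp only [altT, if_neg hpar]
          exact h0
    have hfac : trans d ω (σ j') (σ (j'+1)) = 0 := by
      rw [hj'eq, hstep]
      exact trans_self ω _
    have hj'lt : j' < 2*m := by omega
    rw [Finset.prod_eq_zero (Finset.mem_range.mpr hj'lt) hfac, mul_zero]

lemma stay_subset (i0 : Fin (2*d)) (m : ℕ) :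
    {f : Traj d | ∀ k, f k ∈ ({0, dir d i0} : Set (V d))} ⊆
      ⋃ (g : Fin (2*m+1) → ({0, dir d i0} : Set (V d))),
        Cyl d (extSeq d (2*m) (fun j => (g j : V d))) (2*m) := by
  intro f hf
  refine Set.mem_iUnion.mpr ⟨fun j => ⟨f (j : ℕ), hf (j : ℕ)⟩, ?_⟩
  intro k hk
  simp [Cyl, extSeq, Nat.lt_succ_of_le hk]

end Aux4

section Aux5

variable {d : ℕ}

lemma annealed_cyl (ℙ : Measure (Env d)) {Pq : Env d → V d → Measure (Traj d)}
    (hQ : IsQuenchedLaw d Pq) (σ : Traj d) (n : ℕ) :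
    annealed d ℙ Pq 0 (Cyl d σ n) = ∫⁻ ω, ENNReal.ofReal
      ((if σ 0 = 0 then (1:ℝ) else 0) *
        ∏ k ∈ Finset.range n, trans d ω (σ k) (σ (k+1))) ∂ℙ := by
  rw [annealed_apply ℙ hQ (measurableSet_cyl σ n)]
  exact lintegral_congr fun ω => Pq_cyl hQ ω 0 σ n

lemma en_lower {ℙ : Measure (Env d)} {μ : Measure (Simplex d)} (hIID : IsIIDWith d ℙ μ)
    {Pq : Env d → V d → Measure (Traj d)} (hQ : IsQuenchedLaw d Pq)
    {βe : Fin (2 * d) → ℝ} {C : ℝ} (hC : 1 < C)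
    (htail : ∀ (i : Fin (2 * d)) (t : Fin (2 * d) → ℝ), (∀ j, 0 ≤ t j ∧ t j ≤ 1) →
      ENNReal.ofReal (C⁻¹ * ∏ j ∈ Finset.univ.erase i, t j ^ βe j) ≤
        ℙ {ω | ∀ j : Fin (2 * d), j ≠ i → (ω 0).1 j ≤ t j})
    (i0 : Fin (2 * d)) (hd : 1 ≤ d) (n : ℕ) :
    ENNReal.ofReal ((3:ℝ)⁻¹ *
      (C⁻¹ * (((2*(d:ℝ)) * ((n:ℝ)+1))⁻¹) ^ (∑ j ∈ Finset.univ.erase i0, βe j)) *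
      (C⁻¹ * (((2*(d:ℝ)) * ((n:ℝ)+1))⁻¹) ^ (∑ j ∈ Finset.univ.erase (opp i0), βe j)))
      ≤ annealed d ℙ Pq 0 (Cyl d (altT d i0) n) := by
  classical
  set t : ℝ := ((2*(d:ℝ)) * ((n:ℝ)+1))⁻¹ with htdef
  have hd' : (1:ℝ) ≤ (d:ℝ) := by exact_mod_cast hd
  have h2d : (0:ℝ) < 2*(d:ℝ) := by linarith
  have hn1 : (0:ℝ) < (n:ℝ)+1 := by positivity
  have htpos : 0 < t := inv_pos.mpr (mul_pos h2d hn1)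
  have htle1 : t ≤ 1 := by
    rw [htdef, inv_le_one₀ (mul_pos h2d hn1)]
    nlinarith
  have hCpos : (0:ℝ) < C⁻¹ := inv_pos.mpr (by linarith)
  set A0 := {p : Simplex d | ∀ j, j ≠ i0 → p.1 j ≤ t} with hA0def
  set A1 := {p : Simplex d | ∀ j, j ≠ opp i0 → p.1 j ≤ t} with hA1def
  have hA0m := lowset_measurable i0 t
  have hA1m := lowset_measurable (opp i0) t
  have he0 : (0:V d) ≠ dir d i0 := fun h => dir_ne_zero i0 h.symm
  set A : Set (Env d) := {ω : Env d | ω 0 ∈ A0 ∧ ω (dir d i0) ∈ A1} with hAdef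
  have hAm : MeasurableSet A := by
    have hev0 : Measurable fun ω : Env d => ω (0 : V d) := measurable_pi_apply _
    have hev1 : Measurable fun ω : Env d => ω (dir d i0) := measurable_pi_apply _
    have hAeq : A = (fun ω : Env d => ω 0) ⁻¹' A0 ∩ (fun ω : Env d => ω (dir d i0)) ⁻¹' A1 := rfl
    rw [hAeq]
    exact (hev0 hA0m).inter (hev1 hA1m)
  have hPA : ℙ A = μ A0 * μ A1 := two_site hIID hA0m hA1m he0
  have hμ0 : ENNReal.ofReal (C⁻¹ * t ^ (∑ j ∈ Finset.univ.erase i0, βe j)) ≤ μ A0 := by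
    have h := htail i0 (fun _ => t) (fun j => ⟨htpos.le, htle1⟩)
    rw [← single_site hIID hA0m 0]
    have heq : C⁻¹ * ∏ j ∈ Finset.univ.erase i0, (fun _ : Fin (2*d) => t) j ^ βe j =
        C⁻¹ * t ^ (∑ j ∈ Finset.univ.erase i0, βe j) := by
      rw [Real.rpow_sum_of_pos htpos]
    rw [heq] at h
    exact h
  have hμ1 : ENNReal.ofReal (C⁻¹ * t ^ (∑ j ∈ Finset.univ.erase (opp i0), βe j)) ≤ μ A1 := by
    have h := htail (opp i0) (fun _ => t) (fun j => ⟨htpos.le, htle1⟩)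
    rw [← single_site hIID hA1m 0]
    have heq : C⁻¹ * ∏ j ∈ Finset.univ.erase (opp i0), (fun _ : Fin (2*d) => t) j ^ βe j =
        C⁻¹ * t ^ (∑ j ∈ Finset.univ.erase (opp i0), βe j) := by
      rw [Real.rpow_sum_of_pos htpos]
    rw [heq] at h
    exact h
  have hc0 : (0:ℝ) ≤ 1 - 1/((n:ℝ)+1) := by
    have h1 : 1/((n:ℝ)+1) ≤ 1 := by
      rw [div_le_one hn1]; linarith
    linarith
  have h2dt : (2*(d:ℝ)) * t = 1/((n:ℝ)+1) := by
    rw [htdef]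
    field_simp
  have hpt : ∀ ω ∈ A, ((1 - 1/((n:ℝ)+1))^n : ℝ) ≤
      ∏ k ∈ Finset.range n, trans d ω (altT d i0 k) (altT d i0 (k+1)) := by
    rintro ω ⟨h0, h1⟩
    apply prod_trans_ge i0 ω n hc0
    · have hlb := lowset_bound (ω 0) i0 htpos.le h0
      rw [h2dt] at hlb
      linarith
    · have hlb := lowset_bound (ω (dir d i0)) (opp i0) htpos.le h1
      rw [h2dt] at hlb
      linarith
  have halt0 : (if altT d i0 0 = (0:V d) then (1:ℝ) else 0) = 1 := by simp [altT]
  have hIle : ∫⁻ ω, A.indicator (fun _ => ENNReal.ofReal ((1 - 1/((n:ℝ)+1))^n)) ω ∂ℙ ≤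
      ∫⁻ ω, ENNReal.ofReal ((if altT d i0 0 = (0:V d) then (1:ℝ) else 0) *
        ∏ k ∈ Finset.range n, trans d ω (altT d i0 k) (altT d i0 (k+1))) ∂ℙ := by
    apply lintegral_mono
    intro ω
    simp only [halt0, one_mul]
    by_cases hω : ω ∈ A
    · rw [Set.indicator_of_mem hω]
      exact ENNReal.ofReal_le_ofReal (hpt ω hω)
    · rw [Set.indicator_of_notMem hω]
      exact zero_le
  rw [annealed_cyl ℙ hQ _ n]
  refine le_trans ?_ hIle
  rw [lintegral_indicator_const hAm, hPA]
  have hnn0 : (0:ℝ) ≤ C⁻¹ * t ^ (∑ j ∈ Finset.univ.erase i0, βe j) :=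
    mul_nonneg hCpos.le (Real.rpow_nonneg htpos.le _)
  calc ENNReal.ofReal ((3:ℝ)⁻¹ *
        (C⁻¹ * t ^ (∑ j ∈ Finset.univ.erase i0, βe j)) *
        (C⁻¹ * t ^ (∑ j ∈ Finset.univ.erase (opp i0), βe j)))
      = ENNReal.ofReal ((3:ℝ)⁻¹) * ENNReal.ofReal (C⁻¹ * t ^ (∑ j ∈ Finset.univ.erase i0, βe j))
        * ENNReal.ofReal (C⁻¹ * t ^ (∑ j ∈ Finset.univ.erase (opp i0), βe j)) := by
        rw [← ENNReal.ofReal_mul (by norm_num), ← ENNReal.ofReal_mul (mul_nonneg (by norm_num) hnn0)]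
    _ ≤ ENNReal.ofReal ((1 - 1/((n:ℝ)+1))^n) * (μ A0 * μ A1) := by
        rw [mul_assoc]
        exact mul_le_mul' (ENNReal.ofReal_le_ofReal (one_third_le_pow n)) (mul_le_mul' hμ0 hμ1)

lemma stay_zero {ℙ : Measure (Env d)} {μ : Measure (Simplex d)} (hIID : IsIIDWith d ℙ μ)
    {Pq : Env d → V d → Measure (Traj d)} (hQ : IsQuenchedLaw d Pq)
    (hEll : IsElliptic d ℙ) (i0 : Fin (2*d)) :
    annealed d ℙ Pq 0 {f : Traj d | ∀ k, f k ∈ ({0, dir d i0} : Set (V d))} = 0 := by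
  classical
  haveI : IsProbabilityMeasure ℙ := hIID.1
  have hle : ∀ m : ℕ, annealed d ℙ Pq 0 {f : Traj d | ∀ k, f k ∈ ({0, dir d i0} : Set (V d))} ≤
      annealed d ℙ Pq 0 (Cyl d (altT d i0) (2*m)) := by
    intro m
    have hagree : ∀ k ≤ 2*m,
        extSeq d (2*m) (fun j => ((⟨altT d i0 (j:ℕ), altT_mem i0 (j:ℕ)⟩ :
          ({0, dir d i0} : Set (V d))) : V d)) k = altT d i0 k := by
      intro k hk
      simp [extSeq, Nat.lt_succ_of_le hk]
    calc annealed d ℙ Pq 0 {f : Traj d | ∀ k, f k ∈ ({0, dir d i0} : Set (V d))}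
        ≤ annealed d ℙ Pq 0 (⋃ (g : Fin (2*m+1) → ({0, dir d i0} : Set (V d))),
            Cyl d (extSeq d (2*m) (fun j => (g j : V d))) (2*m)) :=
          measure_mono (stay_subset i0 m)
      _ ≤ ∑' (g : Fin (2*m+1) → ({0, dir d i0} : Set (V d))),
            annealed d ℙ Pq 0 (Cyl d (extSeq d (2*m) (fun j => (g j : V d))) (2*m)) :=
          measure_iUnion_le _
      _ = annealed d ℙ Pq 0 (Cyl d (extSeq d (2*m)
            (fun j => ((⟨altT d i0 (j:ℕ), altT_mem i0 (j:ℕ)⟩ :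
              ({0, dir d i0} : Set (V d))) : V d))) (2*m)) := by
          apply tsum_eq_single
          intro g hg
          rw [annealed_cyl ℙ hQ]
          have hgg : ¬ ∀ j : Fin (2*m+1), (g j : V d) = altT d i0 (j : ℕ) := by
            intro hall
            apply hg
            funext j
            exact Subtype.ext (hall j)
          have hz : ∀ ω : Env d, ENNReal.ofReal
              ((if extSeq d (2*m) (fun j => (g j : V d)) 0 = 0 then (1:ℝ) else 0) *
                ∏ k ∈ Finset.range (2*m), trans d ω (extSeq d (2*m) (fun j => (g j : V d)) k)
                  (extSeq d (2*m) (fun j => (g j : V d)) (k+1))) = 0 := by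
            intro ω
            rw [integrand_zero i0 g hgg ω, ENNReal.ofReal_zero]
          rw [lintegral_congr hz, lintegral_zero]
      _ = annealed d ℙ Pq 0 (Cyl d (altT d i0) (2*m)) := by
          rw [cyl_congr hagree]
  have hup : ∀ m, annealed d ℙ Pq 0 (Cyl d (altT d i0) (2*m)) ≤
      ∫⁻ ω, ENNReal.ofReal (((ω 0).1 i0)^m) ∂ℙ := by
    intro m
    rw [annealed_cyl ℙ hQ]
    apply lintegral_mono
    intro ω
    apply ENNReal.ofReal_le_ofReal
    have halt0 : (if altT d i0 0 = (0:V d) then (1:ℝ) else 0) = 1 := by simp [altT]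
    rw [halt0, one_mul]
    exact prod_trans_le i0 ω m
  have hae : ∀ᵐ ω ∂ℙ, 0 < (ω 0).1 (opp i0) := by
    have hm : MeasurableSet {ω : Env d | 0 < (ω 0).1 (opp i0)} :=
      measurableSet_lt measurable_const (measurable_env_eval 0 (opp i0))
    have hcompl : ℙ {ω : Env d | 0 < (ω 0).1 (opp i0)}ᶜ = 0 :=
      (prob_compl_eq_zero_iff hm).mpr (hEll 0 (opp i0))
    apply ae_iff.mpr
    simpa [Set.compl_setOf] using hcompl
  have hdct : Filter.Tendsto (fun m => ∫⁻ ω, ENNReal.ofReal (((ω 0).1 i0)^m) ∂ℙ)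
      Filter.atTop (𝓝 0) := by
    have h := tendsto_lintegral_of_dominated_convergence (μ := ℙ)
      (F := fun m ω => ENNReal.ofReal (((ω 0).1 i0)^m)) (f := fun _ => 0) (bound := fun _ => 1)
      (fun m => ENNReal.measurable_ofReal.comp ((measurable_env_eval 0 i0).pow_const m))
      (fun m => Filter.Eventually.of_forall fun ω => by
        apply ENNReal.ofReal_le_one.mpr
        exact pow_le_one₀ (simplex_nonneg _ _) (simplex_le_one _ _))
      (by rw [lintegral_one, measure_univ]; exact ENNReal.one_ne_top)
      ?_
    · simpa using h
    · filter_upwards [hae] with ω hω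
      have hx1 : (ω 0).1 i0 < 1 := by
        have h3 : (ω 0).1 i0 + ∑ j ∈ Finset.univ.erase i0, (ω 0).1 j = 1 := by
          rw [Finset.add_sum_erase _ _ (Finset.mem_univ i0)]
          exact (ω 0).2.2
        have h4 : (ω 0).1 (opp i0) ≤ ∑ j ∈ Finset.univ.erase i0, (ω 0).1 j :=
          Finset.single_le_sum (fun j _ => (ω 0).2.1 j)
            (Finset.mem_erase.mpr ⟨opp_ne i0, Finset.mem_univ _⟩)
        linarith
      have h5 := tendsto_pow_atTop_nhds_zero_of_lt_one (simplex_nonneg (ω 0) i0) hx1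
      have h6 := ENNReal.tendsto_ofReal h5
      simpa using h6
  have htend : Filter.Tendsto (fun m => annealed d ℙ Pq 0 (Cyl d (altT d i0) (2*m)))
      Filter.atTop (𝓝 0) :=
    tendsto_of_tendsto_of_tendsto_of_le_of_le tendsto_const_nhds hdct
      (fun m => zero_le) hup
  exact le_antisymm (ge_of_tendsto' htend hle) (zero_le)

lemma series_top {b c0 : ℝ} (hb : 0 < b) (hc0 : 0 < c0) :
    (∑' n : ℕ, ENNReal.ofReal (((n:ℝ)+1) ^ b - (n:ℝ) ^ b) *
      ENNReal.ofReal (c0 * ((n:ℝ)+1) ^ (-b))) = ⊤ := by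
  classical
  set term : ℕ → ℝ≥0∞ := fun n => ENNReal.ofReal (((n:ℝ)+1) ^ b - (n:ℝ) ^ b) *
    ENNReal.ofReal (c0 * ((n:ℝ)+1) ^ (-b)) with hterm
  have hmono : ∀ k : ℕ, ((k:ℝ)) ^ b ≤ (((k:ℝ))+1) ^ b := fun k =>
    Real.rpow_le_rpow (Nat.cast_nonneg k) (by linarith) hb.le
  have hblock : ∀ N : ℕ, 1 ≤ N →
      ENNReal.ofReal (c0 * (1 - 2 ^ (-b))) ≤ ∑ n ∈ Finset.Ico N (2*N), term n := by
    intro N hN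
    have hNpos : (0:ℝ) < (N:ℝ) := by exact_mod_cast hN
    have h2Npos : (0:ℝ) < ((2*N : ℕ):ℝ) := by
      push_cast; linarith
    have hstep : ∀ n ∈ Finset.Ico N (2*N),
        ENNReal.ofReal (((n:ℝ)+1) ^ b - (n:ℝ) ^ b) *
          ENNReal.ofReal (c0 * (((2*N:ℕ):ℝ)) ^ (-b)) ≤ term n := by
      intro n hn
      apply mul_le_mul_right
      apply ENNReal.ofReal_le_ofReal
      apply mul_le_mul_of_nonneg_left _ hc0.le
      have hn2 : ((n:ℝ)+1) ≤ ((2*N:ℕ):ℝ) := by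
        have h := (Finset.mem_Ico.mp hn).2
        exact_mod_cast h
      have hn1pos : (0:ℝ) < (n:ℝ)+1 := by positivity
      rw [Real.rpow_neg hn1pos.le, Real.rpow_neg h2Npos.le]
      exact inv_anti₀ (Real.rpow_pos_of_pos hn1pos b) (Real.rpow_le_rpow hn1pos.le hn2 hb.le)
    have hsum : ∑ n ∈ Finset.Ico N (2*N), ENNReal.ofReal (((n:ℝ)+1) ^ b - (n:ℝ) ^ b)
        = ENNReal.ofReal (((2*N:ℕ):ℝ) ^ b - (N:ℝ) ^ b) := by
      rw [← ENNReal.ofReal_sum_of_nonneg (fun n _ => by linarith [hmono n])]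
      congr 1
      rw [Finset.sum_Ico_eq_sub _ (by omega)]
      have h1 : ∀ M : ℕ, ∑ n ∈ Finset.range M, (((n:ℝ)+1) ^ b - (n:ℝ) ^ b)
          = ((M:ℝ)) ^ b - ((0:ℝ)) ^ b := by
        intro M
        have h2 := Finset.sum_range_sub (fun i : ℕ => ((i:ℝ)) ^ b) M
        simp only [Nat.cast_add, Nat.cast_one, Nat.cast_zero] at h2
        rw [← h2]
      rw [h1, h1, Real.zero_rpow hb.ne']
      ring
    have halg : ENNReal.ofReal (c0 * (1 - 2 ^ (-b))) =
        ENNReal.ofReal (((2*N:ℕ):ℝ) ^ b - (N:ℝ) ^ b) *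
          ENNReal.ofReal (c0 * (((2*N:ℕ):ℝ)) ^ (-b)) := by
      have hNle : (N:ℝ) ^ b ≤ ((2*N:ℕ):ℝ) ^ b := by
        apply Real.rpow_le_rpow hNpos.le _ hb.le
        push_cast; linarith
      rw [← ENNReal.ofReal_mul (by linarith)]
      congr 1
      have h2N : ((2*N:ℕ):ℝ) = 2 * (N:ℝ) := by push_cast; ring
      have hNb : (0:ℝ) < (N:ℝ) ^ b := Real.rpow_pos_of_pos hNpos b
      have h2b : (0:ℝ) < (2:ℝ) ^ b := Real.rpow_pos_of_pos (by norm_num) b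
      have e1 : (2*(N:ℝ))^(-b) = ((2:ℝ)^b * (N:ℝ)^b)⁻¹ := by
        rw [Real.rpow_neg (by positivity), Real.mul_rpow (by norm_num) hNpos.le]
      have e2 : (2:ℝ)^(-b) = ((2:ℝ)^b)⁻¹ := Real.rpow_neg (by norm_num) b
      have e3 : (2*(N:ℝ))^b = (2:ℝ)^b * (N:ℝ)^b := Real.mul_rpow (by norm_num) hNpos.le
      rw [h2N, e1, e3, e2]
      field_simp
    calc ENNReal.ofReal (c0 * (1 - 2 ^ (-b)))
        = ENNReal.ofReal (((2*N:ℕ):ℝ) ^ b - (N:ℝ) ^ b) *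
            ENNReal.ofReal (c0 * (((2*N:ℕ):ℝ)) ^ (-b)) := halg
      _ = (∑ n ∈ Finset.Ico N (2*N), ENNReal.ofReal (((n:ℝ)+1) ^ b - (n:ℝ) ^ b)) *
            ENNReal.ofReal (c0 * (((2*N:ℕ):ℝ)) ^ (-b)) := by rw [hsum]
      _ = ∑ n ∈ Finset.Ico N (2*N), ENNReal.ofReal (((n:ℝ)+1) ^ b - (n:ℝ) ^ b) *
            ENNReal.ofReal (c0 * (((2*N:ℕ):ℝ)) ^ (-b)) := Finset.sum_mul _ _ _
      _ ≤ ∑ n ∈ Finset.Ico N (2*N), term n := Finset.sum_le_sum hstep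
  have hK : ∀ K : ℕ, (K : ℝ≥0∞) * ENNReal.ofReal (c0 * (1 - 2 ^ (-b))) ≤ ∑' n, term n := by
    intro K
    have hKsum : (K : ℝ≥0∞) * ENNReal.ofReal (c0 * (1 - 2 ^ (-b))) ≤
        ∑ n ∈ Finset.Ico 1 (2^K), term n := by
      induction K with
      | zero => simp
      | succ K ih =>
        have h1 : (1:ℕ) ≤ 2^K := Nat.one_le_two_pow
        have h2 : (2:ℕ)^K ≤ 2^(K+1) := Nat.pow_le_pow_right (by norm_num) (by omega)
        rw [← Finset.sum_Ico_consecutive term h1 h2]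
        have hb2 : ENNReal.ofReal (c0 * (1 - 2 ^ (-b))) ≤
            ∑ n ∈ Finset.Ico (2^K) (2^(K+1)), term n := by
          have h3 := hblock (2^K) Nat.one_le_two_pow
          rwa [show 2*2^K = 2^(K+1) by ring] at h3
        have hcast : ((K+1 : ℕ) : ℝ≥0∞) = (K : ℝ≥0∞) + 1 := by push_cast; ring
        rw [hcast, add_mul, one_mul]
        exact add_le_add ih hb2
    exact hKsum.trans (ENNReal.sum_le_tsum _)
  apply ENNReal.eq_top_of_forall_nnreal_le
  intro r
  set x := c0 * (1 - 2 ^ (-b)) with hx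
  have hxpos : 0 < x := by
    apply mul_pos hc0
    have h2 : (2:ℝ) ^ (-b) < 1 := Real.rpow_lt_one_of_one_lt_of_neg (by norm_num) (by linarith)
    linarith
  have hrK : (r:ℝ) ≤ (⌈(r:ℝ)/x⌉₊ : ℝ) * x := by
    have h2 := Nat.le_ceil ((r:ℝ)/x)
    calc (r:ℝ) = ((r:ℝ)/x)*x := by field_simp
      _ ≤ _ := mul_le_mul_of_nonneg_right h2 hxpos.le
  calc (r : ℝ≥0∞) = ENNReal.ofReal (r:ℝ) := (ENNReal.ofReal_coe_nnreal).symm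
    _ ≤ ENNReal.ofReal ((⌈(r:ℝ)/x⌉₊ : ℝ) * x) := ENNReal.ofReal_le_ofReal hrK
    _ = (⌈(r:ℝ)/x⌉₊ : ℝ≥0∞) * ENNReal.ofReal x := by
        rw [ENNReal.ofReal_mul (Nat.cast_nonneg _), ENNReal.ofReal_natCast]
    _ ≤ ∑' n, term n := hK _

lemma pointwise_tsum {i0 : Fin (2*d)} {b : ℝ} (hb : 0 < b) (f : Traj d) :
    (∑' n : ℕ, ((Cyl d (altT d i0) n \
        {f' : Traj d | ∀ k, f' k ∈ ({0, dir d i0} : Set (V d))}).indicator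
      (fun _ => ENNReal.ofReal (((n:ℝ)+1) ^ b - (n:ℝ) ^ b)) f))
      ≤ ENNReal.ofReal (((exitTime d ({0, dir d i0} : Set (V d)) f : ℕ) : ℝ) ^ b) := by
  classical
  set S := {f' : Traj d | ∀ k, f' k ∈ ({0, dir d i0} : Set (V d))} with hSdef
  by_cases hfS : f ∈ S
  · have hz : ∀ n : ℕ, ((Cyl d (altT d i0) n \ S).indicator
        (fun _ => ENNReal.ofReal (((n:ℝ)+1) ^ b - (n:ℝ) ^ b)) f) = 0 := fun n =>
      Set.indicator_of_notMem (fun h => h.2 hfS) _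
    rw [tsum_congr hz, tsum_zero]
    exact zero_le
  · have hQne : Set.Nonempty {n : ℕ | f ∉ Cyl d (altT d i0) n} := by
      by_contra hcon
      rw [Set.not_nonempty_iff_eq_empty] at hcon
      apply hfS
      intro k
      have hk : f ∈ Cyl d (altT d i0) k := by
        by_contra h2
        exact Set.eq_empty_iff_forall_notMem.mp hcon k h2
      rw [hk k (le_refl k)]
      exact altT_mem i0 k
    set M := sInf {n : ℕ | f ∉ Cyl d (altT d i0) n} with hM
    have hMnotin : f ∉ Cyl d (altT d i0) M := Nat.sInf_mem hQne
    have hterm0 : ∀ n ∉ Finset.range M, ((Cyl d (altT d i0) n \ S).indicator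
        (fun _ => ENNReal.ofReal (((n:ℝ)+1) ^ b - (n:ℝ) ^ b)) f) = 0 := by
      intro n hn
      apply Set.indicator_of_notMem
      intro hmem
      exact hMnotin (en_nested (by simpa using hn) hmem.1)
    rw [tsum_eq_sum hterm0]
    have htermval : ∀ n ∈ Finset.range M, ((Cyl d (altT d i0) n \ S).indicator
        (fun _ => ENNReal.ofReal (((n:ℝ)+1) ^ b - (n:ℝ) ^ b)) f) =
        ENNReal.ofReal (((n:ℝ)+1) ^ b - (n:ℝ) ^ b) := by
      intro n hn
      apply Set.indicator_of_mem
      refine ⟨?_, hfS⟩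
      have hnM : n < M := Finset.mem_range.mp hn
      have := Nat.notMem_of_lt_sInf (by rw [← hM]; exact hnM)
      simpa using this
    rw [Finset.sum_congr rfl htermval]
    have hmono : ∀ k : ℕ, ((k:ℝ)) ^ b ≤ (((k:ℝ))+1) ^ b := fun k =>
      Real.rpow_le_rpow (Nat.cast_nonneg k) (by linarith) hb.le
    have hsum : ∑ n ∈ Finset.range M, ENNReal.ofReal (((n:ℝ)+1) ^ b - (n:ℝ) ^ b)
        = ENNReal.ofReal (((M:ℝ)) ^ b) := by
      rw [← ENNReal.ofReal_sum_of_nonneg (fun n _ => by linarith [hmono n])]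
      congr 1
      have h2 := Finset.sum_range_sub (fun i : ℕ => ((i:ℝ)) ^ b) M
      simp only [Nat.cast_add, Nat.cast_one, Nat.cast_zero] at h2
      rw [h2, Real.zero_rpow hb.ne', sub_zero]
    rw [hsum]
    apply ENNReal.ofReal_le_ofReal
    apply Real.rpow_le_rpow (Nat.cast_nonneg M) ?_ hb.le
    have hfS' : ∃ k, f k ∉ ({0, dir d i0} : Set (V d)) := by
      by_contra hc
      push_neg at hc
      exact hfS hc
    have hTne : Set.Nonempty {n : ℕ | f n ∉ ({0, dir d i0} : Set (V d))} := hfS'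
    have hTmem : f (exitTime d ({0, dir d i0} : Set (V d)) f) ∉ ({0, dir d i0} : Set (V d)) :=
      Nat.sInf_mem hTne
    have hMT : M ≤ exitTime d ({0, dir d i0} : Set (V d)) f := by
      by_contra hlt
      push_neg at hlt
      have hcy : f ∈ Cyl d (altT d i0) (exitTime d ({0, dir d i0} : Set (V d)) f) := by
        have h3 := Nat.notMem_of_lt_sInf (by rw [← hM]; exact hlt)
        simpa using h3
      have heq := hcy _ (le_refl _)
      exact hTmem (by rw [heq]; exact altT_mem i0 _)
    exact_mod_cast hMT

end Aux5
/-- **Remark (sharpness: infinite moments of the exit time of a trap).**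
Under the tail lower bound on the environment at one site, if `e₀` maximizes
`β_e + β_{-e}` and `K = {0, e₀}`, then `E₀(T_K^β) = ∞` for every
`β ≥ 2Σ_{e'} β_{e'} − (β_{e₀} + β_{-e₀})`; consequently any random variable dominating
`T_K^β` (such as `(τ₁^{v̂})^β`) has infinite expectation. -/
theorem trap_infinite_moments
    (d : ℕ) (hd : 1 ≤ d)
    (ℙ : Measure (Env d)) (Pq : Env d → V d → Measure (Traj d))
    (hQ : IsQuenchedLaw d Pq) (hIID : IsIID d ℙ) (hEll : IsElliptic d ℙ)
    (βe : Fin (2 * d) → ℝ) (hβe : ∀ i, 0 ≤ βe i)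
    (C : ℝ) (hC : 1 < C)
    (htail : ∀ (i : Fin (2 * d)) (t : Fin (2 * d) → ℝ), (∀ j, 0 ≤ t j ∧ t j ≤ 1) →
      ENNReal.ofReal (C⁻¹ * ∏ j ∈ Finset.univ.erase i, t j ^ βe j) ≤
        ℙ {ω | ∀ j : Fin (2 * d), j ≠ i → (ω 0).1 j ≤ t j})
    (i0 : Fin (2 * d)) (hi0 : ∀ i, βe i + βe (opp i) ≤ βe i0 + βe (opp i0))
    (b : ℝ) (hb : 2 * (∑ j, βe j) - (βe i0 + βe (opp i0)) ≤ b) :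
    (∫⁻ f, ENNReal.ofReal
        (((exitTime d ({0, dir d i0} : Set (V d)) f : ℕ) : ℝ) ^ b) ∂(annealed d ℙ Pq 0) = ⊤) ∧
    ∀ τ : Traj d → ℝ≥0∞,
      (∀ f, ENNReal.ofReal (((exitTime d ({0, dir d i0} : Set (V d)) f : ℕ) : ℝ) ^ b) ≤ τ f) →
      ∫⁻ f, τ f ∂(annealed d ℙ Pq 0) = ⊤ := by
  classical
  obtain ⟨μ, hIIDw⟩ := hIID
  haveI : IsProbabilityMeasure ℙ := hIIDw.1
  have hB0 : (0:ℝ) ≤ ∑ j ∈ Finset.univ.erase i0, βe j :=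
    Finset.sum_nonneg fun j _ => hβe j
  have hB1 : (0:ℝ) ≤ ∑ j ∈ Finset.univ.erase (opp i0), βe j :=
    Finset.sum_nonneg fun j _ => hβe j
  have hBb : (∑ j ∈ Finset.univ.erase i0, βe j) +
      (∑ j ∈ Finset.univ.erase (opp i0), βe j) ≤ b := by
    have h0 : ∑ j ∈ Finset.univ.erase i0, βe j = (∑ j, βe j) - βe i0 :=
      Finset.sum_erase_eq_sub (Finset.mem_univ i0)
    have h1 : ∑ j ∈ Finset.univ.erase (opp i0), βe j = (∑ j, βe j) - βe (opp i0) :=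
      Finset.sum_erase_eq_sub (Finset.mem_univ _)
    rw [h0, h1]
    linarith
  have hCpos : (0:ℝ) < C⁻¹ := inv_pos.mpr (by linarith)
  have hbpos : 0 < b := by
    by_contra hble
    push_neg at hble
    have hB00 : ∑ j ∈ Finset.univ.erase i0, βe j = 0 := le_antisymm (by linarith) hB0
    have hzero : ∀ j ∈ Finset.univ.erase i0, βe j = 0 :=
      (Finset.sum_eq_zero_iff_of_nonneg (fun j _ => hβe j)).mp hB00
    have h := htail i0 (fun _ => 0) (fun j => ⟨le_refl 0, by norm_num⟩)
    have hprod : C⁻¹ * ∏ j ∈ Finset.univ.erase i0, (fun _ : Fin (2*d) => (0:ℝ)) j ^ βe j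
        = C⁻¹ * 1 := by
      congr 1
      apply Finset.prod_eq_one
      intro j hj
      rw [hzero j hj, Real.rpow_zero]
    rw [hprod, mul_one] at h
    have hm : MeasurableSet {ω : Env d | 0 < (ω 0).1 (opp i0)} :=
      measurableSet_lt measurable_const (measurable_env_eval 0 (opp i0))
    have hcompl : ℙ {ω : Env d | 0 < (ω 0).1 (opp i0)}ᶜ = 0 :=
      (prob_compl_eq_zero_iff hm).mpr (hEll 0 (opp i0))
    have hsub : {ω : Env d | ∀ j : Fin (2*d), j ≠ i0 →
        (ω 0).1 j ≤ (fun _ : Fin (2*d) => (0:ℝ)) j} ⊆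
        {ω : Env d | 0 < (ω 0).1 (opp i0)}ᶜ := by
      intro ω hω hpos
      exact absurd (hω (opp i0) (opp_ne i0)) (not_le.mpr hpos)
    have hle0 : ℙ {ω : Env d | ∀ j : Fin (2*d), j ≠ i0 →
        (ω 0).1 j ≤ (fun _ : Fin (2*d) => (0:ℝ)) j} = 0 :=
      le_antisymm (hcompl ▸ measure_mono hsub) (zero_le)
    rw [hle0] at h
    exact absurd h (not_le.mpr (ENNReal.ofReal_pos.mpr hCpos))
  have hSzero := stay_zero hIIDw hQ hEll i0
  have hEnm : ∀ n : ℕ, MeasurableSet (Cyl d (altT d i0) n) := fun n => measurableSet_cyl _ _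
  have hSm : MeasurableSet {f' : Traj d | ∀ k, f' k ∈ ({0, dir d i0} : Set (V d))} := by
    have hKm : MeasurableSet ({0, dir d i0} : Set (V d)) :=
      (measurableSet_singleton (dir d i0)).insert 0
    have h : {f' : Traj d | ∀ k, f' k ∈ ({0, dir d i0} : Set (V d))} =
        ⋂ k : ℕ, (fun f' : Traj d => f' k) ⁻¹' ({0, dir d i0} : Set (V d)) := by
      ext f'; simp
    rw [h]
    exact MeasurableSet.iInter fun k => (measurable_pi_apply k) hKm
  set c0 : ℝ := 3⁻¹ * C⁻¹ * C⁻¹ * (2*(d:ℝ)) ^ (-b) with hc0def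
  have hd' : (1:ℝ) ≤ (d:ℝ) := by exact_mod_cast hd
  have h2d : (0:ℝ) < 2*(d:ℝ) := by linarith
  have hc0pos : 0 < c0 := by
    have hrp := Real.rpow_pos_of_pos h2d (-b)
    exact mul_pos (mul_pos (mul_pos (by norm_num) hCpos) hCpos) hrp
  have hEnLB : ∀ n : ℕ, ENNReal.ofReal (c0 * ((n:ℝ)+1) ^ (-b)) ≤
      annealed d ℙ Pq 0 (Cyl d (altT d i0) n) := by
    intro n
    refine le_trans (ENNReal.ofReal_le_ofReal ?_) (en_lower hIIDw hQ hC htail i0 hd n)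
    have hn1 : (0:ℝ) < (n:ℝ)+1 := by positivity
    set t : ℝ := ((2*(d:ℝ)) * ((n:ℝ)+1))⁻¹ with htdef
    have htpos : 0 < t := inv_pos.mpr (mul_pos h2d hn1)
    have htle1 : t ≤ 1 := by
      rw [htdef, inv_le_one₀ (mul_pos h2d hn1)]
      nlinarith
    have hsplit : t ^ b = (2*(d:ℝ)) ^ (-b) * ((n:ℝ)+1) ^ (-b) := by
      rw [htdef, Real.inv_rpow (mul_pos h2d hn1).le, Real.mul_rpow h2d.le hn1.le, mul_inv,
        Real.rpow_neg h2d.le, Real.rpow_neg hn1.le]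
    have hmono : t ^ b ≤ t ^ ((∑ j ∈ Finset.univ.erase i0, βe j) +
        (∑ j ∈ Finset.univ.erase (opp i0), βe j)) :=
      Real.rpow_le_rpow_of_exponent_ge htpos htle1 hBb
    have hnn : (0:ℝ) ≤ 3⁻¹ * C⁻¹ * C⁻¹ :=
      mul_nonneg (mul_nonneg (by norm_num) hCpos.le) hCpos.le
    calc c0 * ((n:ℝ)+1)^(-b) = 3⁻¹ * C⁻¹ * C⁻¹ * t ^ b := by
          rw [hc0def, hsplit]; ring
      _ ≤ 3⁻¹ * C⁻¹ * C⁻¹ * t ^ ((∑ j ∈ Finset.univ.erase i0, βe j) +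
            (∑ j ∈ Finset.univ.erase (opp i0), βe j)) :=
          mul_le_mul_of_nonneg_left hmono hnn
      _ = 3⁻¹ * (C⁻¹ * t ^ (∑ j ∈ Finset.univ.erase i0, βe j)) *
            (C⁻¹ * t ^ (∑ j ∈ Finset.univ.erase (opp i0), βe j)) := by
          rw [Real.rpow_add htpos]; ring
  have hmain : ∫⁻ f, ENNReal.ofReal
      (((exitTime d ({0, dir d i0} : Set (V d)) f : ℕ) : ℝ) ^ b) ∂(annealed d ℙ Pq 0) = ⊤ := by
    have hum : ∀ n : ℕ, Measurable ((Cyl d (altT d i0) n \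
        {f' : Traj d | ∀ k, f' k ∈ ({0, dir d i0} : Set (V d))}).indicator
        (fun _ => ENNReal.ofReal (((n:ℝ)+1) ^ b - (n:ℝ) ^ b))) := fun n =>
      measurable_const.indicator ((hEnm n).diff hSm)
    have h2 := lintegral_tsum (μ := annealed d ℙ Pq 0)
      (f := fun n : ℕ => (Cyl d (altT d i0) n \
        {f' : Traj d | ∀ k, f' k ∈ ({0, dir d i0} : Set (V d))}).indicator
        (fun _ => ENNReal.ofReal (((n:ℝ)+1) ^ b - (n:ℝ) ^ b)))
      (fun n => (hum n).aemeasurable)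
    have h3 : ∀ n : ℕ, ∫⁻ f, (Cyl d (altT d i0) n \
        {f' : Traj d | ∀ k, f' k ∈ ({0, dir d i0} : Set (V d))}).indicator
          (fun _ => ENNReal.ofReal (((n:ℝ)+1) ^ b - (n:ℝ) ^ b)) f ∂(annealed d ℙ Pq 0)
        = ENNReal.ofReal (((n:ℝ)+1) ^ b - (n:ℝ) ^ b) *
            annealed d ℙ Pq 0 (Cyl d (altT d i0) n) := by
      intro n
      rw [lintegral_indicator_const ((hEnm n).diff hSm), measure_diff_null hSzero]
    have h4 : (∑' n : ℕ, ENNReal.ofReal (((n:ℝ)+1) ^ b - (n:ℝ) ^ b) *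
        annealed d ℙ Pq 0 (Cyl d (altT d i0) n)) ≤
        ∫⁻ f, ENNReal.ofReal (((exitTime d ({0, dir d i0} : Set (V d)) f : ℕ) : ℝ) ^ b)
          ∂(annealed d ℙ Pq 0) := by
      calc (∑' n : ℕ, ENNReal.ofReal (((n:ℝ)+1) ^ b - (n:ℝ) ^ b) *
            annealed d ℙ Pq 0 (Cyl d (altT d i0) n))
          = ∑' n : ℕ, ∫⁻ f, (Cyl d (altT d i0) n \
              {f' : Traj d | ∀ k, f' k ∈ ({0, dir d i0} : Set (V d))}).indicator
              (fun _ => ENNReal.ofReal (((n:ℝ)+1) ^ b - (n:ℝ) ^ b)) f ∂(annealed d ℙ Pq 0) :=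
            tsum_congr fun n => (h3 n).symm
        _ = ∫⁻ f, ∑' n : ℕ, (Cyl d (altT d i0) n \
              {f' : Traj d | ∀ k, f' k ∈ ({0, dir d i0} : Set (V d))}).indicator
              (fun _ => ENNReal.ofReal (((n:ℝ)+1) ^ b - (n:ℝ) ^ b)) f ∂(annealed d ℙ Pq 0) :=
            h2.symm
        _ ≤ _ := lintegral_mono fun f => pointwise_tsum hbpos f
    apply eq_top_iff.mpr
    refine le_trans ?_ h4
    rw [← series_top hbpos hc0pos]
    exact le_of_eq rfl |>.trans (ENNReal.tsum_le_tsum fun n => mul_le_mul_right (hEnLB n) _)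
  refine ⟨hmain, ?_⟩
  intro τ hτ
  apply eq_top_iff.mpr
  calc (⊤:ℝ≥0∞) = ∫⁻ f, ENNReal.ofReal
        (((exitTime d ({0, dir d i0} : Set (V d)) f : ℕ) : ℝ) ^ b) ∂(annealed d ℙ Pq 0) :=
      hmain.symm
    _ ≤ ∫⁻ f, τ f ∂(annealed d ℙ Pq 0) := lintegral_mono hτ

end RWRE
end

section
/- (Generalized max-flow-min-cut theorem.) Let G = (V,E) be a finite directed graph, let (c(e))_{e∈E} be nonnegative capacities, let x_0 ∈ V, and let (p_x)_{x∈V} be nonnegative reals. Then there exists a function θ : E → [0,∞) satisfying div θ = Σ_{x∈V} p_x(δ_{x_0} − δ_x) and θ(e) ≤ c(e) for all e ∈ E, if and only if for every subset K ⊆ V containing x_0 one has c(∂_+K) := Σ_{e∈E : e̲∈K, ē∈K^c} c(e) ≥ Σ_{x∈K^c} p_x. Moreover, the same equivalence holds if the cut condition is only required for those K such that every y ∈ K can be reached from x_0 by a directed path in K. -/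
open MeasureTheory Filter Topology
open scoped ENNReal NNReal Classical BigOperators

namespace RWRE

/-- Divergence of `θ` at a vertex `z` of a finite directed graph given by tail and head
maps `src tgt : Et → Vt`. -/
noncomputable def divFin {Vt Et : Type*} [Fintype Et] (src tgt : Et → Vt)
    (θ : Et → ℝ) (z : Vt) : ℝ :=
  (∑ e ∈ Finset.univ.filter (fun e => src e = z), θ e) -
    ∑ e ∈ Finset.univ.filter (fun e => tgt e = z), θ e

/-- `θ` is a sub-capacity function with divergence `Σ_x p_x (δ_{x₀} - δ_x)`. -/
def HasCompatibleFlow {Vt Et : Type*} [Fintype Vt] [Fintype Et] (src tgt : Et → Vt)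
    (c : Et → ℝ) (x0 : Vt) (p : Vt → ℝ) : Prop :=
  ∃ θ : Et → ℝ, (∀ e, 0 ≤ θ e) ∧ (∀ e, θ e ≤ c e) ∧
    ∀ z : Vt, divFin src tgt θ z =
      ∑ x : Vt, p x * ((if z = x0 then 1 else 0) - (if z = x then 1 else 0))

/-- Every vertex of `K` can be reached from `x₀` by a directed path staying in `K`. -/
def ReachableIn {Vt Et : Type*} (src tgt : Et → Vt) (K : Finset Vt) (x0 y : Vt) : Prop :=
  ∃ (m : ℕ) (σ : ℕ → Vt), σ 0 = x0 ∧ σ m = y ∧ (∀ k ≤ m, σ k ∈ K) ∧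
    ∀ k < m, ∃ e, src e = σ k ∧ tgt e = σ (k + 1)

section MFMCAux

variable {Vt Et : Type} [Fintype Vt] [Fintype Et] (src tgt : Et → Vt)

lemma sum_filter_comp (f : Et → Vt) (θ : Et → ℝ) (K : Finset Vt) :
    ∑ z ∈ K, ∑ e ∈ Finset.univ.filter (fun e => f e = z), θ e
      = ∑ e ∈ Finset.univ.filter (fun e => f e ∈ K), θ e := by
  simp only [Finset.sum_filter]
  rw [Finset.sum_comm]
  refine Finset.sum_congr rfl fun e _ => ?_
  simp [Finset.sum_ite_eq K (f e) fun _ => θ e]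

lemma sum_divFin (θ : Et → ℝ) (K : Finset Vt) :
    ∑ z ∈ K, divFin src tgt θ z
      = (∑ e ∈ Finset.univ.filter (fun e => src e ∈ K ∧ tgt e ∉ K), θ e)
        - ∑ e ∈ Finset.univ.filter (fun e => src e ∉ K ∧ tgt e ∈ K), θ e := by
  simp only [divFin, Finset.sum_sub_distrib]
  rw [sum_filter_comp src θ K, sum_filter_comp tgt θ K]
  simp only [Finset.sum_filter, ← Finset.sum_sub_distrib]
  refine Finset.sum_congr rfl fun e _ => ?_
  by_cases hs : src e ∈ K <;> by_cases ht : tgt e ∈ K <;> simp [hs, ht]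

lemma sum_divFin_univ (θ : Et → ℝ) : ∑ z, divFin src tgt θ z = 0 := by
  rw [sum_divFin src tgt θ Finset.univ]
  simp

lemma continuous_divFin (z : Vt) :
    Continuous (fun θ : Et → ℝ => divFin src tgt θ z) :=
  (continuous_finset_sum _ fun e _ => continuous_apply e).sub
    (continuous_finset_sum _ fun e _ => continuous_apply e)

lemma sum_update (θ : Et → ℝ) (e0 : Et) (t : ℝ) (s : Finset Et) :
    ∑ e ∈ s, Function.update θ e0 t e
      = (∑ e ∈ s, θ e) + if e0 ∈ s then t - θ e0 else 0 := by
  have : ∀ e, Function.update θ e0 t e = θ e + if e = e0 then t - θ e0 else 0 := by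
    intro e
    by_cases h : e = e0 <;> simp [h, Function.update]
  simp only [this, Finset.sum_add_distrib]
  congr 1
  simp [Finset.sum_ite_eq' s e0 fun _ => t - θ e0]

lemma divFin_update (θ : Et → ℝ) (e0 : Et) (t : ℝ) (w : Vt) :
    divFin src tgt (Function.update θ e0 t) w
      = divFin src tgt θ w
        + (t - θ e0) * ((if src e0 = w then (1:ℝ) else 0) - (if tgt e0 = w then 1 else 0)) := by
  simp only [divFin, sum_update]
  by_cases hs : src e0 = w <;> by_cases ht : tgt e0 = w <;>
    simp [hs, ht, Finset.mem_filter] <;> ring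

/-- The residual relation for a flow `θ` with capacities `c`. -/
def Resid (c : Et → ℝ) (θ : Et → ℝ) (u v : Vt) : Prop :=
  ∃ e, (src e = u ∧ tgt e = v ∧ θ e < c e) ∨ (src e = v ∧ tgt e = u ∧ 0 < θ e)

/-- Augmentation along a residual path: the divergence can be decreased by `δ` at the
endpoint, at the cost of increasing it at `x0` only. -/
lemma aug_lemma (c : Et → ℝ) (x0 : Vt) (θ : Et → ℝ) (hθ : ∀ e, 0 ≤ θ e ∧ θ e ≤ c e)
    (z : Vt) (hz : Relation.ReflTransGen (Resid src tgt c θ) x0 z) :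
    ∃ ε M : ℝ, 0 < ε ∧ 0 < M ∧ ∀ δ : ℝ, 0 < δ → δ ≤ ε → ∃ θ' : Et → ℝ,
      (∀ e, 0 ≤ θ' e ∧ θ' e ≤ c e) ∧ (∀ e, |θ' e - θ e| ≤ M * δ) ∧
      ∀ w, w ≠ x0 →
        divFin src tgt θ' w = divFin src tgt θ w - (if w = z then δ else 0) := by
  induction hz with
  | refl =>
    refine ⟨1, 1, one_pos, one_pos, fun δ hδ hδ1 => ⟨θ, hθ, fun e => by simp [abs_nonneg, hδ.le, le_of_lt hδ], fun w hw => by simp [hw]⟩⟩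
  | @tail u v hpath hstep ih =>
    obtain ⟨ε, M, hε, hM, H⟩ := ih
    obtain ⟨e0, he0⟩ := hstep
    rcases he0 with ⟨hs, ht, hlt⟩ | ⟨hs, ht, hpos⟩
    · -- forward residual edge: push δ more along e0
      refine ⟨min ε ((c e0 - θ e0) / (M + 1)), M + 1,
        lt_min hε (div_pos (by linarith) (by linarith)), by linarith, ?_⟩
      intro δ hδ hδε
      obtain ⟨θ', hfeas, hclose, hdiv⟩ := H δ hδ (le_trans hδε (min_le_left _ _))
      have hroom : (M + 1) * δ ≤ c e0 - θ e0 := by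
        have h1 : δ ≤ (c e0 - θ e0) / (M + 1) := le_trans hδε (min_le_right _ _)
        have h2 := (le_div_iff₀ (by linarith : (0:ℝ) < M + 1)).mp h1
        linarith
      refine ⟨Function.update θ' e0 (θ' e0 + δ), ?_, ?_, ?_⟩
      · intro e
        by_cases he : e = e0
        · subst he
          have h1 := abs_le.mp (hclose e)
          constructor
          · simp [Function.update_self]
            have := (hfeas e).1; linarith
          · simp [Function.update_self]
            linarith [h1.2]
        · simp [Function.update_of_ne he]; exact hfeas e
      · intro e
        by_cases he : e = e0
        · subst he
          simp only [Function.update_self]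
          have h1 := abs_le.mp (hclose e)
          rw [abs_le]
          constructor <;> nlinarith
        · rw [Function.update_of_ne he]
          have := hclose e
          nlinarith
      · intro w hw
        rw [divFin_update, hdiv w hw, hs, ht]
        have : θ' e0 + δ - θ' e0 = δ := by ring
        rw [this]
        by_cases h1 : w = u <;> by_cases h2 : w = v <;> by_cases h3 : u = v <;>
          simp_all [eq_comm] <;> ring
    · -- backward residual edge: reduce flow on e0 by δ
      refine ⟨min ε (θ e0 / (M + 1)), M + 1,
        lt_min hε (div_pos hpos (by linarith)), by linarith, ?_⟩
      intro δ hδ hδε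
      obtain ⟨θ', hfeas, hclose, hdiv⟩ := H δ hδ (le_trans hδε (min_le_left _ _))
      have hroom : (M + 1) * δ ≤ θ e0 := by
        have h1 : δ ≤ θ e0 / (M + 1) := le_trans hδε (min_le_right _ _)
        have h2 := (le_div_iff₀ (by linarith : (0:ℝ) < M + 1)).mp h1
        linarith
      refine ⟨Function.update θ' e0 (θ' e0 - δ), ?_, ?_, ?_⟩
      · intro e
        by_cases he : e = e0
        · subst he
          have h1 := abs_le.mp (hclose e)
          constructor
          · simp [Function.update_self]
            linarith [h1.2]
          · simp [Function.update_self]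
            have := (hfeas e).2; linarith
        · simp [Function.update_of_ne he]; exact hfeas e
      · intro e
        by_cases he : e = e0
        · subst he
          simp only [Function.update_self]
          have h1 := abs_le.mp (hclose e)
          rw [abs_le]
          constructor <;> nlinarith
        · rw [Function.update_of_ne he]
          have := hclose e
          nlinarith
      · intro w hw
        rw [divFin_update, hdiv w hw, hs, ht]
        have : θ' e0 - δ - θ' e0 = -δ := by ring
        rw [this]
        by_cases h1 : w = u <;> by_cases h2 : w = v <;> by_cases h3 : u = v <;>
          simp_all [eq_comm] <;> ring

lemma rhs_simp (x0 : Vt) (p : Vt → ℝ) (z : Vt) :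
    ∑ x : Vt, p x * ((if z = x0 then (1:ℝ) else 0) - (if z = x then 1 else 0))
      = (if z = x0 then ∑ x : Vt, p x else 0) - p z := by
  simp only [mul_sub, Finset.sum_sub_distrib]
  congr 1
  · by_cases h : z = x0 <;> simp [h]
  · simp [mul_ite, Finset.sum_ite_eq Finset.univ z p]

/-- The hard direction: the cut condition implies existence of a compatible flow. -/
lemma flow_of_cut (c : Et → ℝ) (hc : ∀ e, 0 ≤ c e) (x0 : Vt) (p : Vt → ℝ) (hp : ∀ x, 0 ≤ p x)
    (hcut : ∀ K : Finset Vt, x0 ∈ K →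
      ∑ x ∈ Kᶜ, p x ≤ ∑ e ∈ Finset.univ.filter (fun e => src e ∈ K ∧ tgt e ∉ K), c e) :
    HasCompatibleFlow src tgt c x0 p := by
  classical
  -- the compact feasible set of subflows
  set S : Set (Et → ℝ) := {θ | (∀ e, 0 ≤ θ e ∧ θ e ≤ c e) ∧
      ∀ z, z ≠ x0 → -p z ≤ divFin src tgt θ z ∧ divFin src tgt θ z ≤ 0} with hS
  have hS0 : (0 : Et → ℝ) ∈ S := by
    constructor
    · intro e; exact ⟨le_refl _, hc e⟩
    · intro z _; simp [divFin, hp z]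
  have hclosed : IsClosed S := by
    apply IsClosed.inter
    · show IsClosed {θ : Et → ℝ | ∀ e, 0 ≤ θ e ∧ θ e ≤ c e}
      have : {θ : Et → ℝ | ∀ e, 0 ≤ θ e ∧ θ e ≤ c e}
          = ⋂ e, ((fun θ : Et → ℝ => θ e) ⁻¹' Set.Icc 0 (c e)) := by
        ext θ; simp [Set.mem_iInter, Set.mem_Icc]
      rw [this]
      exact isClosed_iInter fun e => isClosed_Icc.preimage (continuous_apply e)
    · show IsClosed {θ : Et → ℝ | ∀ z, z ≠ x0 → -p z ≤ divFin src tgt θ z ∧ divFin src tgt θ z ≤ 0}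
      have : {θ : Et → ℝ | ∀ z, z ≠ x0 → -p z ≤ divFin src tgt θ z ∧ divFin src tgt θ z ≤ 0}
          = ⋂ z, {θ : Et → ℝ | z ≠ x0 → -p z ≤ divFin src tgt θ z ∧ divFin src tgt θ z ≤ 0} := by
        ext θ; simp [Set.mem_iInter]
      rw [this]
      refine isClosed_iInter fun z => ?_
      by_cases hz : z = x0
      · simp only [hz]
        convert isClosed_univ using 1
        ext θ; simp
      · have : {θ : Et → ℝ | z ≠ x0 → -p z ≤ divFin src tgt θ z ∧ divFin src tgt θ z ≤ 0}
            = (fun θ : Et → ℝ => divFin src tgt θ z) ⁻¹' Set.Icc (-p z) 0 := by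
          ext θ; simp [hz, Set.mem_Icc]
        rw [this]
        exact isClosed_Icc.preimage (continuous_divFin src tgt z)
  have hcompact : IsCompact S := by
    have hbox : IsCompact (Set.pi Set.univ fun e : Et => Set.Icc (0:ℝ) (c e)) :=
      isCompact_univ_pi fun e => isCompact_Icc
    exact hbox.of_isClosed_subset hclosed
      (fun θ hθ e _ => Set.mem_Icc.mpr ⟨(hθ.1 e).1, (hθ.1 e).2⟩)
  obtain ⟨θ, hθS, hmax⟩ := hcompact.exists_isMaxOn ⟨0, hS0⟩
    (continuous_divFin src tgt x0).continuousOn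
  obtain ⟨hθfeas, hθdiv⟩ := hθS
  -- the set of residually reachable vertices
  set K : Finset Vt := Finset.univ.filter
    (fun z => Relation.ReflTransGen (Resid src tgt c θ) x0 z) with hK
  have hx0K : x0 ∈ K := Finset.mem_filter.mpr ⟨Finset.mem_univ _, Relation.ReflTransGen.refl⟩
  have hmemK : ∀ z, z ∈ K ↔ Relation.ReflTransGen (Resid src tgt c θ) x0 z := by
    intro z; simp [hK]
  -- every reachable vertex other than x0 has saturated deficit
  have hKsat : ∀ z ∈ K, z ≠ x0 → divFin src tgt θ z = -p z := by
    intro z hzK hzx0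
    by_contra hne
    have hgt : -p z < divFin src tgt θ z := lt_of_le_of_ne (hθdiv z hzx0).1 (Ne.symm hne)
    obtain ⟨ε, M, hε, hM, H⟩ := aug_lemma src tgt c x0 θ hθfeas z ((hmemK z).mp hzK)
    set δ : ℝ := min ε (divFin src tgt θ z + p z) with hδdef
    have hδpos : 0 < δ := lt_min hε (by linarith)
    obtain ⟨θ', hfeas', hclose', hdiv'⟩ := H δ hδpos (min_le_left _ _)
    have hθ'S : θ' ∈ S := by
      refine ⟨hfeas', fun w hw => ?_⟩
      rw [hdiv' w hw]
      by_cases hwz : w = z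
      · subst hwz
        simp only [eq_self_iff_true, if_true]
        have h2 : δ ≤ divFin src tgt θ w + p w := min_le_right _ _
        exact ⟨by linarith, by linarith [(hθdiv w hw).2]⟩
      · simp only [if_neg hwz, sub_zero]
        exact hθdiv w hw
    -- value strictly increases, contradicting maximality
    have hval : ∀ ϑ : Et → ℝ,
        divFin src tgt ϑ x0 = -∑ w ∈ Finset.univ.erase x0, divFin src tgt ϑ w := by
      intro ϑ
      have h0 := sum_divFin_univ src tgt ϑ
      rw [← Finset.sum_erase_add _ _ (Finset.mem_univ x0)] at h0
      linarith
    have hsum : ∑ w ∈ Finset.univ.erase x0, divFin src tgt θ' w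
        = (∑ w ∈ Finset.univ.erase x0, divFin src tgt θ w) - δ := by
      have : ∀ w ∈ Finset.univ.erase x0,
          divFin src tgt θ' w = divFin src tgt θ w - (if w = z then δ else 0) := by
        intro w hw
        exact hdiv' w (Finset.mem_erase.mp hw).1
      rw [Finset.sum_congr rfl this, Finset.sum_sub_distrib]
      congr 1
      rw [Finset.sum_ite_eq' (Finset.univ.erase x0) z fun _ => δ]
      simp [hzx0]
    have : divFin src tgt θ' x0 = divFin src tgt θ x0 + δ := by
      rw [hval θ', hval θ, hsum]; ring
    have hcontr := hmax hθ'S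
    simp only [Set.mem_setOf_eq] at hcontr
    rw [this] at hcontr
    linarith
  -- edges crossing the cut are saturated / empty
  have hout : ∀ e, src e ∈ K → tgt e ∉ K → θ e = c e := by
    intro e hsK htK
    by_contra hne
    exact htK ((hmemK _).mpr (((hmemK _).mp hsK).tail
      ⟨e, Or.inl ⟨rfl, rfl, lt_of_le_of_ne (hθfeas e).2 hne⟩⟩))
  have hin : ∀ e, src e ∉ K → tgt e ∈ K → θ e = 0 := by
    intro e hsK htK
    by_contra hne
    exact hsK ((hmemK _).mpr (((hmemK _).mp htK).tail
      ⟨e, Or.inr ⟨rfl, rfl, lt_of_le_of_ne (hθfeas e).1 (Ne.symm hne)⟩⟩))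
  -- the cut K is saturated
  have hKsum : ∑ z ∈ K, divFin src tgt θ z
      = ∑ e ∈ Finset.univ.filter (fun e => src e ∈ K ∧ tgt e ∉ K), c e := by
    rw [sum_divFin src tgt θ K]
    have h1 : ∑ e ∈ Finset.univ.filter (fun e => src e ∈ K ∧ tgt e ∉ K), θ e
        = ∑ e ∈ Finset.univ.filter (fun e => src e ∈ K ∧ tgt e ∉ K), c e :=
      Finset.sum_congr rfl fun e he => by
        have := Finset.mem_filter.mp he
        exact hout e this.2.1 this.2.2
    have h2 : ∑ e ∈ Finset.univ.filter (fun e => src e ∉ K ∧ tgt e ∈ K), θ e = 0 :=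
      Finset.sum_eq_zero fun e he => by
        have := Finset.mem_filter.mp he
        exact hin e this.2.1 this.2.2
    rw [h1, h2, sub_zero]
  -- compute the value of the maximal flow
  have hval0 : divFin src tgt θ x0 = -∑ w ∈ Finset.univ.erase x0, divFin src tgt θ w := by
    have h0 := sum_divFin_univ src tgt θ
    rw [← Finset.sum_erase_add _ _ (Finset.mem_univ x0)] at h0
    linarith
  have hvalle : divFin src tgt θ x0 ≤ ∑ w ∈ Finset.univ.erase x0, p w := by
    rw [hval0]
    have : ∀ w ∈ Finset.univ.erase x0, -divFin src tgt θ w ≤ p w := fun w hw => by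
      have := (hθdiv w (Finset.mem_erase.mp hw).1).1; linarith
    calc -∑ w ∈ Finset.univ.erase x0, divFin src tgt θ w
        = ∑ w ∈ Finset.univ.erase x0, -divFin src tgt θ w := by rw [← Finset.sum_neg_distrib]
      _ ≤ ∑ w ∈ Finset.univ.erase x0, p w := Finset.sum_le_sum this
  have hKsplit : ∑ z ∈ K, divFin src tgt θ z
      = divFin src tgt θ x0 - ∑ z ∈ K.erase x0, p z := by
    rw [← Finset.add_sum_erase _ _ hx0K]
    congr 1
    rw [← Finset.sum_neg_distrib]
    refine Finset.sum_congr rfl fun z hz => ?_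
    have hz' := Finset.mem_erase.mp hz
    rw [hKsat z hz'.2 hz'.1]
  have hcompl : ∑ x ∈ Kᶜ, p x + ∑ z ∈ K.erase x0, p z = ∑ w ∈ Finset.univ.erase x0, p w := by
    have hsub : K.erase x0 ⊆ Finset.univ.erase x0 := fun z hz =>
      Finset.mem_erase.mpr ⟨(Finset.mem_erase.mp hz).1, Finset.mem_univ z⟩
    have hsd : (Finset.univ.erase x0) \ (K.erase x0) = Kᶜ := by
      ext z
      simp only [Finset.mem_sdiff, Finset.mem_erase, Finset.mem_univ, and_true,
        Finset.mem_compl, not_and]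
      constructor
      · rintro ⟨hzx, hz⟩ hzK; exact (hz hzx) hzK
      · intro hzK
        refine ⟨fun h => hzK (h ▸ hx0K), fun _ h => hzK h⟩
    rw [← hsd]
    exact Finset.sum_sdiff hsub
  have hvalge : ∑ w ∈ Finset.univ.erase x0, p w ≤ divFin src tgt θ x0 := by
    have h1 := hcut K hx0K
    rw [← hKsum, hKsplit] at h1
    linarith [hcompl]
  have hvaleq : divFin src tgt θ x0 = ∑ w ∈ Finset.univ.erase x0, p w :=
    le_antisymm hvalle hvalge
  -- therefore all deficits are saturated
  have hall : ∀ z, z ≠ x0 → divFin src tgt θ z = -p z := by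
    intro z hz
    have hzero : ∑ w ∈ Finset.univ.erase x0, (p w + divFin src tgt θ w) = 0 := by
      rw [Finset.sum_add_distrib]
      have := hval0
      rw [hvaleq] at this
      linarith
    have hnonneg : ∀ w ∈ Finset.univ.erase x0, 0 ≤ p w + divFin src tgt θ w := fun w hw => by
      have := (hθdiv w (Finset.mem_erase.mp hw).1).1; linarith
    have := (Finset.sum_eq_zero_iff_of_nonneg hnonneg).mp hzero z
      (Finset.mem_erase.mpr ⟨hz, Finset.mem_univ z⟩)
    linarith
  refine ⟨θ, fun e => (hθfeas e).1, fun e => (hθfeas e).2, fun z => ?_⟩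
  rw [rhs_simp]
  by_cases hz : z = x0
  · rw [hz, if_pos rfl, hvaleq]
    have hE : ∑ w ∈ Finset.univ.erase x0, p w = (∑ x : Vt, p x) - p x0 := by
      rw [← Finset.add_sum_erase _ _ (Finset.mem_univ x0)]; ring
    rw [hE]
  · simp only [if_neg hz, zero_sub]
    exact hall z hz

/-- The easy direction: a compatible flow forces the cut condition. -/
lemma cut_of_flow (c : Et → ℝ) (x0 : Vt) (p : Vt → ℝ)
    (hflow : HasCompatibleFlow src tgt c x0 p) :
    ∀ K : Finset Vt, x0 ∈ K →
      ∑ x ∈ Kᶜ, p x ≤ ∑ e ∈ Finset.univ.filter (fun e => src e ∈ K ∧ tgt e ∉ K), c e := by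
  obtain ⟨θ, h0, hle, hdiv⟩ := hflow
  intro K hx0K
  have hsum : ∑ z ∈ K, divFin src tgt θ z = ∑ x ∈ Kᶜ, p x := by
    have h1 : ∀ z ∈ K, divFin src tgt θ z = (if z = x0 then ∑ x : Vt, p x else 0) - p z := by
      intro z _; rw [hdiv z, rhs_simp]
    rw [Finset.sum_congr rfl h1, Finset.sum_sub_distrib]
    have h2 : ∑ z ∈ K, (if z = x0 then ∑ x : Vt, p x else 0) = ∑ x : Vt, p x := by
      rw [Finset.sum_ite_eq' K x0 fun _ => ∑ x : Vt, p x, if_pos hx0K]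
    rw [h2]
    have h3 := Finset.sum_add_sum_compl K p
    linarith
  rw [← hsum, sum_divFin src tgt θ K]
  have h4 : ∑ e ∈ Finset.univ.filter (fun e => src e ∈ K ∧ tgt e ∉ K), θ e
      ≤ ∑ e ∈ Finset.univ.filter (fun e => src e ∈ K ∧ tgt e ∉ K), c e :=
    Finset.sum_le_sum fun e _ => hle e
  have h5 : 0 ≤ ∑ e ∈ Finset.univ.filter (fun e => src e ∉ K ∧ tgt e ∈ K), θ e :=
    Finset.sum_nonneg fun e _ => h0 e
  linarith

/-- Extending a path by one edge. -/
lemma reachable_step (K : Finset Vt) (x0 : Vt) (e : Et)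
    (h : ReachableIn src tgt K x0 (src e)) (hv : tgt e ∈ K) :
    ReachableIn src tgt K x0 (tgt e) := by
  obtain ⟨m, σ, h0, hm, hmem, hedge⟩ := h
  refine ⟨m + 1, fun k => if k ≤ m then σ k else tgt e, by simp [h0], by simp, ?_, ?_⟩
  · intro k hk
    by_cases h' : k ≤ m
    · simpa [h'] using hmem k h'
    · simpa [h'] using hv
  · intro k hk
    rcases Nat.lt_succ_iff_lt_or_eq.mp hk with h' | h'
    · obtain ⟨e', he'⟩ := hedge k h'
      exact ⟨e', by simpa [Nat.le_of_lt h', Nat.succ_le_of_lt h'] using he'⟩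
    · subst h'
      refine ⟨e, by simp [hm], by simp⟩

/-- The restricted cut condition implies the full cut condition. -/
lemma cut_of_cut_reach (c : Et → ℝ) (hc : ∀ e, 0 ≤ c e) (x0 : Vt) (p : Vt → ℝ)
    (hp : ∀ x, 0 ≤ p x)
    (hw : ∀ K : Finset Vt, x0 ∈ K → (∀ y ∈ K, ReachableIn src tgt K x0 y) →
      ∑ x ∈ Kᶜ, p x ≤ ∑ e ∈ Finset.univ.filter (fun e => src e ∈ K ∧ tgt e ∉ K), c e) :
    ∀ K : Finset Vt, x0 ∈ K →
      ∑ x ∈ Kᶜ, p x ≤ ∑ e ∈ Finset.univ.filter (fun e => src e ∈ K ∧ tgt e ∉ K), c e := by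
  classical
  intro K hx0K
  set K' : Finset Vt := K.filter (fun y => ReachableIn src tgt K x0 y) with hK'
  have hmemK' : ∀ y, y ∈ K' ↔ y ∈ K ∧ ReachableIn src tgt K x0 y := by
    intro y; simp [hK']
  have hx0K' : x0 ∈ K' := (hmemK' x0).mpr
    ⟨hx0K, ⟨0, fun _ => x0, rfl, rfl, fun k _ => hx0K, fun k hk => absurd hk (Nat.not_lt_zero k)⟩⟩
  have hKsub : K' ⊆ K := fun y hy => ((hmemK' y).mp hy).1
  have hreach' : ∀ y ∈ K', ReachableIn src tgt K' x0 y := by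
    intro y hy
    obtain ⟨m, σ, h0, hm, hmem, hedge⟩ := ((hmemK' y).mp hy).2
    refine ⟨m, σ, h0, hm, fun k hk => ?_, hedge⟩
    refine (hmemK' (σ k)).mpr ⟨hmem k hk, ⟨k, σ, h0, rfl, fun j hj => hmem j (hj.trans hk),
      fun j hj => hedge j (lt_of_lt_of_le hj hk)⟩⟩
  have hcross : ∀ e, src e ∈ K' → tgt e ∉ K' → src e ∈ K ∧ tgt e ∉ K := by
    intro e hs ht
    refine ⟨hKsub hs, fun htK => ht ?_⟩
    exact (hmemK' (tgt e)).mpr ⟨htK, reachable_step src tgt K x0 e ((hmemK' _).mp hs).2 htK⟩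
  calc ∑ x ∈ Kᶜ, p x
      ≤ ∑ x ∈ K'ᶜ, p x := by
        refine Finset.sum_le_sum_of_subset_of_nonneg ?_ (fun x _ _ => hp x)
        intro x hx
        simp only [Finset.mem_compl] at *
        exact fun h => hx (hKsub h)
    _ ≤ ∑ e ∈ Finset.univ.filter (fun e => src e ∈ K' ∧ tgt e ∉ K'), c e :=
        hw K' hx0K' hreach'
    _ ≤ ∑ e ∈ Finset.univ.filter (fun e => src e ∈ K ∧ tgt e ∉ K), c e := by
        refine Finset.sum_le_sum_of_subset_of_nonneg ?_ (fun e _ _ => hc e)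
        intro e he
        simp only [Finset.mem_filter, Finset.mem_univ, true_and] at *
        exact hcross e he.1 he.2

end MFMCAux

/-- **Proposition (generalized max-flow–min-cut theorem).**
On a finite directed graph with capacities `c ≥ 0`, a source `x₀` and weights `p ≥ 0`,
a nonnegative `θ ≤ c` with `div θ = Σ_x p_x (δ_{x₀} - δ_x)` exists iff every set `K`
containing `x₀` satisfies `c(∂₊K) ≥ Σ_{x ∉ K} p_x`; and it suffices to check this for
the sets `K` all of whose points are reachable from `x₀` within `K`. -/
theorem max_flow_min_cut
    (Vt Et : Type) [Fintype Vt] [Fintype Et]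
    (src tgt : Et → Vt)
    (c : Et → ℝ) (hc : ∀ e, 0 ≤ c e)
    (x0 : Vt) (p : Vt → ℝ) (hp : ∀ x, 0 ≤ p x) :
    (HasCompatibleFlow src tgt c x0 p ↔
      ∀ K : Finset Vt, x0 ∈ K →
        ∑ x ∈ Kᶜ, p x ≤ ∑ e ∈ Finset.univ.filter (fun e => src e ∈ K ∧ tgt e ∉ K), c e) ∧
    (HasCompatibleFlow src tgt c x0 p ↔
      ∀ K : Finset Vt, x0 ∈ K → (∀ y ∈ K, ReachableIn src tgt K x0 y) →
        ∑ x ∈ Kᶜ, p x ≤ ∑ e ∈ Finset.univ.filter (fun e => src e ∈ K ∧ tgt e ∉ K), c e) := by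
  constructor
  · exact ⟨cut_of_flow src tgt c x0 p,
      fun h => flow_of_cut src tgt c hc x0 p hp h⟩
  · constructor
    · intro hflow K hx0K _
      exact cut_of_flow src tgt c x0 p hflow K hx0K
    · intro hw
      exact flow_of_cut src tgt c hc x0 p hp (cut_of_cut_reach src tgt c hc x0 p hp hw)
end RWRE
end

section
/- Let d ≥ 1, let α_1, …, α_{2d} be positive constants with κ_i = 2Σ_{j=1}^{2d} α_j − (α_i + α_{i+d}), let x ∈ ℤ^d and 1 ≤ i ≤ 2d, and let K ⊂ ℤ^d be any finite set containing both x and x+e_i. Then the total weight of the directed edges exiting K satisfies Σ α_j ≥ κ_i, where the sum ranges over all edges (z, z+e_j) with z ∈ K and z+e_j ∉ K, and where the edge (z, z+e_j) contributes weight α_j. -/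
open MeasureTheory Filter Topology
open scoped ENNReal NNReal Classical BigOperators

namespace RWRE

lemma dir_coord_spec (d : ℕ) (i : Fin (2 * d)) :
    ∃ t : Fin d, (dir d i t = 1 ∨ dir d i t = -1) ∧
      ∀ j : Fin (2 * d), j ≠ i → j ≠ opp i → dir d j t = 0 := by
  have hi := i.isLt
  obtain ⟨ti, htd, hcase⟩ : ∃ ti : ℕ, ti < d ∧ ((i : ℕ) = ti ∨ (i : ℕ) = ti + d) := by
    rcases Nat.lt_or_ge (i : ℕ) d with h | h
    · exact ⟨i, h, Or.inl rfl⟩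
    · exact ⟨(i : ℕ) - d, by omega, Or.inr (by omega)⟩
  refine ⟨⟨ti, htd⟩, ?_, ?_⟩
  · simp only [dir]
    rw [if_pos (show ti = (i : ℕ) ∨ ti + d = (i : ℕ) by omega)]
    split_ifs <;> simp
  · intro j hji hjo
    have hj := j.isLt
    have hji' : (j : ℕ) ≠ (i : ℕ) := fun h' => hji (Fin.ext h')
    have hjo' : (j : ℕ) ≠ (opp i : ℕ) := fun h' => hjo (Fin.ext h')
    have hov : (opp i : ℕ) = if (i : ℕ) < d then (i : ℕ) + d else (i : ℕ) - d := rfl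
    have hcond : ¬ (ti = (j : ℕ) ∨ ti + d = (j : ℕ)) := by
      rcases hcase with h | h
      · rw [if_pos (by omega)] at hov
        omega
      · rw [if_neg (by omega)] at hov
        omega
    simp only [dir]
    exact if_neg hcond

lemma dir_not_smul (d : ℕ) (i j : Fin (2 * d)) (hji : j ≠ i) (hjo : j ≠ opp i) (k : ℤ) :
    dir d i ≠ k • dir d j := by
  intro h
  obtain ⟨t, h1, h2⟩ := dir_coord_spec d i
  have h3 := congrFun h t
  rw [Pi.smul_apply] at h3
  by_cases hji2 : j = i
  · subst hji2; exact hji rfl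
  · rw [h2 j hji2 hjo, smul_zero] at h3
    rcases h1 with h1 | h1 <;> rw [h1] at h3 <;> norm_num at h3

lemma exists_exitN (d : ℕ) (K : Set (V d)) (hK : K.Finite) (y : V d) (hy : y ∈ K)
    (j : Fin (2 * d)) :
    ∃ n : ℕ, y + (n : ℤ) • dir d j ∈ K ∧ y + ((n : ℤ) + 1) • dir d j ∉ K := by
  classical
  obtain ⟨t, h1, -⟩ := dir_coord_spec d j
  have hne : dir d j t ≠ 0 := by rcases h1 with h1 | h1 <;> rw [h1] <;> norm_num
  have hinj : Function.Injective (fun n : ℕ => y + (n : ℤ) • dir d j) := by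
    intro n m h
    have h2 : (n : ℤ) • dir d j = (m : ℤ) • dir d j := add_left_cancel h
    have h3 := congrFun h2 t
    simp only [Pi.smul_apply, smul_eq_mul] at h3
    have h4 : (n : ℤ) = m := mul_right_cancel₀ hne h3
    exact_mod_cast h4
  have hpre : {n : ℕ | y + (n : ℤ) • dir d j ∈ K}.Finite :=
    Set.Finite.preimage hinj.injOn hK
  have h0 : (0 : ℕ) ∈ hpre.toFinset := by
    simp only [Set.Finite.mem_toFinset, Set.mem_setOf_eq]
    simpa using hy
  set M := hpre.toFinset.max' ⟨0, h0⟩ with hM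
  have hMmem : M ∈ hpre.toFinset := hpre.toFinset.max'_mem _
  refine ⟨M, ?_, ?_⟩
  · simpa using hMmem
  · intro hc
    have hmem : M + 1 ∈ hpre.toFinset := by
      simp only [Set.Finite.mem_toFinset, Set.mem_setOf_eq]
      have hcast : ((M + 1 : ℕ) : ℤ) = (M : ℤ) + 1 := by push_cast; ring
      rw [hcast]
      exact hc
    have := hpre.toFinset.le_max' _ hmem
    omega

/-- **Lemma (cut-weight estimate).**
For any finite `K ⊆ ℤ^d` containing `x` and `x + e_i`, the total direction-weight of the
directed edges exiting `K` is at least `κ_i = 2Σ_j α_j − (α_i + α_{i+d})`. -/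
theorem cut_weight_estimate
    (d : ℕ) (hd : 1 ≤ d)
    (α : Fin (2 * d) → ℝ) (hα : ∀ j, 0 < α j)
    (x : V d) (i : Fin (2 * d))
    (K : Set (V d)) (hK : K.Finite) (hx : x ∈ K) (hxi : x + dir d i ∈ K) :
    2 * (∑ j, α j) - (α i + α (opp i)) ≤
      ∑ᶠ e ∈ {e : Edge d | tail d e ∈ K ∧ head d e ∉ K}, α e.2 := by
  classical
  have hbase : ∀ b : Bool, (if b then x + dir d i else x) ∈ K := by
    intro b; cases b <;> simpa
  choose N hN1 hN2 using fun (b : Bool) (j : Fin (2 * d)) =>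
    exists_exitN d K hK _ (hbase b) j
  set φ : Bool × Fin (2 * d) → Edge d :=
    fun p => ((if p.1 then x + dir d i else x) + (N p.1 p.2 : ℤ) • dir d p.2, p.2) with hφ
  set s : Finset (Bool × Fin (2 * d)) :=
    Finset.univ.filter (fun p => p.2 ≠ if p.1 then opp i else i) with hs
  set Sf : Finset (Edge d) :=
    (hK.toFinset ×ˢ Finset.univ).filter (fun e => head d e ∉ K) with hSf
  have hset : {e : Edge d | tail d e ∈ K ∧ head d e ∉ K} = ↑Sf := by
    ext e
    simp [hSf, tail, hK.mem_toFinset]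
  rw [hset, finsum_mem_coe_finset]
  -- φ maps s into Sf
  have hmem : ∀ p ∈ s, φ p ∈ Sf := by
    intro p _
    simp only [hSf, Finset.mem_filter, Finset.mem_product, Finset.mem_univ, and_true,
      hK.mem_toFinset]
    refine ⟨hN1 p.1 p.2, ?_⟩
    have hh : head d (φ p) =
        (if p.1 then x + dir d i else x) + ((N p.1 p.2 : ℤ) + 1) • dir d p.2 := by
      simp only [hφ, head, add_smul, one_smul, add_assoc]
    rw [hh]
    exact hN2 p.1 p.2
  -- injectivity of φ on s
  have hinj : ∀ p ∈ s, ∀ q ∈ s, φ p = φ q → p = q := by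
    intro p hp q hq h
    have h12 := Prod.ext_iff.mp h
    have h1 := h12.1
    have h2 : p.2 = q.2 := h12.2
    simp only [hφ] at h1
    rw [← h2] at h1
    by_cases hb : p.1 = q.1
    · exact Prod.ext hb h2
    · exfalso
      have hps := (Finset.mem_filter.mp hp).2
      have hqs := (Finset.mem_filter.mp hq).2
      rw [← h2] at hqs
      have hni : p.2 ≠ i ∧ p.2 ≠ opp i := by
        rcases Bool.eq_false_or_eq_true p.1 with hp1 | hp1 <;>
          rcases Bool.eq_false_or_eq_true q.1 with hq1 | hq1
        -- (true, true)
        · exact absurd (hp1.trans hq1.symm) hb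
        -- (true, false)
        · rw [hp1] at hps; rw [hq1] at hqs
          simp only [if_true] at hps
          simp only [Bool.false_eq_true, if_false] at hqs
          exact ⟨hqs, hps⟩
        -- (false, true)
        · rw [hp1] at hps; rw [hq1] at hqs
          simp only [Bool.false_eq_true, if_false] at hps
          simp only [if_true] at hqs
          exact ⟨hps, hqs⟩
        -- (false, false)
        · exact absurd (hp1.trans hq1.symm) hb
      have key : ∀ a b : ℤ, x + a • dir d p.2 ≠ (x + dir d i) + b • dir d p.2 := by
        intro a b hEq
        apply dir_not_smul d i p.2 hni.1 hni.2 (a - b)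
        rw [add_assoc] at hEq
        have h5 := add_left_cancel hEq
        rw [sub_smul, h5]
        abel
      rcases Bool.eq_false_or_eq_true p.1 with hp1 | hp1 <;>
        rcases Bool.eq_false_or_eq_true q.1 with hq1 | hq1
      · exact absurd (hp1.trans hq1.symm) hb
      · rw [hp1, hq1] at h1
        simp only [Bool.false_eq_true, if_false, if_true] at h1
        exact key _ _ h1.symm
      · rw [hp1, hq1] at h1
        simp only [Bool.false_eq_true, if_false, if_true] at h1
        exact key _ _ h1
      · exact absurd (hp1.trans hq1.symm) hb
  -- sum over s
  have hsumc : ∀ c : Fin (2 * d), (∑ j, if j ≠ c then α j else 0) = (∑ j, α j) - α c := by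
    intro c
    rw [← Finset.sum_filter, Finset.filter_ne', Finset.sum_erase_eq_sub (Finset.mem_univ c)]
  have hsum : ∑ p ∈ s, α p.2 = 2 * (∑ j, α j) - (α i + α (opp i)) := by
    have hsplit : s = ({false} ×ˢ (Finset.univ.erase i)) ∪
        ({true} ×ˢ (Finset.univ.erase (opp i))) := by
      ext p
      rcases p with ⟨b, j⟩
      cases b <;> simp [hs]
    have hdisj : Disjoint ({false} ×ˢ (Finset.univ.erase i))
        (({true} : Finset Bool) ×ˢ (Finset.univ.erase (opp i))) := by
      rw [Finset.disjoint_left]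
      rintro ⟨b, j⟩ hm1 hm2
      simp only [Finset.mem_product, Finset.mem_singleton] at hm1 hm2
      rw [hm1.1] at hm2
      exact Bool.false_ne_true hm2.1
    rw [hsplit, Finset.sum_union hdisj, Finset.sum_product, Finset.sum_product]
    simp only [Finset.sum_singleton]
    rw [Finset.sum_erase_eq_sub (Finset.mem_univ i),
      Finset.sum_erase_eq_sub (Finset.mem_univ (opp i))]
    ring
  calc 2 * (∑ j, α j) - (α i + α (opp i)) = ∑ p ∈ s, α p.2 := hsum.symm
    _ = ∑ e ∈ s.image φ, α e.2 := by rw [Finset.sum_image hinj]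
    _ ≤ ∑ e ∈ Sf, α e.2 := Finset.sum_le_sum_of_subset_of_nonneg
        (Finset.image_subset_iff.mpr hmem) (fun e _ _ => (hα e.2).le)
end RWRE
end
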